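/- arXiv:2310.03099 — 18 statements merged into one kernel-verified Lean document; each statement's English description precedes it below -/
import Mathlib

section
/- Let X be a finite set and let F : X × ℝ≥0 → Set X be a multivalued map satisfying the semigroup property F(x, t+s) = ⋃_{y ∈ F(x,t)} F(y, s) for all x ∈ X and all t, s ≥ 0. Then for every x ∈ X the map t ↦ F(x,t) is constant on the positive reals, i.e., F(x,t) = F(x,s) for all t, s > 0. -/
open Function

lemma iterate_eventually_periodic {α : Type*} (f : α → α) {i p : ℕ}
    (hp : f^[i + p] = f^[i]) : ∀ (k m : ℕ), i ≤ m → f^[m + k * p] = f^[m] := by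
  intro k
  induction k with
  | zero => simp
  | succ k ih =>
    intro m hm
    have h1 : f^[m + p] = f^[m] := by
      have : m + p = (m - i) + (i + p) := by omega
      rw [this, Function.iterate_add, hp, ← Function.iterate_add,
        Nat.sub_add_cancel hm]
    have : m + (k + 1) * p = (m + p) + k * p := by ring
    rw [this, ih (m + p) (by omega), h1]

lemma exists_idem_iterate {α : Type*} [Finite α] (f : α → α) :
    ∃ n : ℕ, 0 < n ∧ f^[n + n] = f^[n] := by
  obtain ⟨i, j, hne, hij⟩ :=
    Finite.exists_ne_map_eq_of_infinite (fun n : ℕ => f^[n])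
  rcases Nat.lt_or_ge i j with h | h
  · have hp : f^[i + (j - i)] = f^[i] := by
      rw [show i + (j - i) = j from by omega]; exact hij.symm
    refine ⟨(i + 1) * (j - i), by nlinarith [(by omega : 1 ≤ j - i)], ?_⟩
    exact iterate_eventually_periodic f hp (i + 1) ((i + 1) * (j - i))
      (by nlinarith [(by omega : 1 ≤ j - i)])
  · have hlt : j < i := by omega
    have hp : f^[j + (i - j)] = f^[j] := by
      rw [show j + (i - j) = i from by omega]; exact hij
    refine ⟨(j + 1) * (i - j), by nlinarith [(by omega : 1 ≤ i - j)], ?_⟩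
    exact iterate_eventually_periodic f hp (j + 1) ((j + 1) * (i - j))
      (by nlinarith [(by omega : 1 ≤ i - j)])

lemma exists_uniform_idem_iterate (α : Type*) [Finite α] :
    ∃ N : ℕ, 0 < N ∧ ∀ f : α → α, f^[N + N] = f^[N] := by
  classical
  cases isEmpty_or_nonempty α
  · exact ⟨1, one_pos, fun f => Subsingleton.elim _ _⟩
  have : Finite (α → α) := by infer_instance
  have := Fintype.ofFinite (α → α)
  choose n hn hid using fun f : α → α => exists_idem_iterate f
  refine ⟨∏ f : α → α, n f, Finset.prod_pos (fun f _ => hn f), fun f => ?_⟩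
  set N := ∏ f : α → α, n f with hN
  have hdvd : n f ∣ N := Finset.dvd_prod_of_mem n (Finset.mem_univ f)
  obtain ⟨c, hc⟩ := hdvd
  have hNpos : 0 < N := Finset.prod_pos (fun f _ => hn f)
  have hcpos : 0 < c := by
    rcases Nat.eq_zero_or_pos c with rfl | h
    · simp [hc] at hNpos
    · exact h
  -- f^[k * n f] = f^[n f] for k ≥ 1
  have key : ∀ k : ℕ, 0 < k → f^[k * n f] = f^[n f] := by
    intro k hk
    induction k with
    | zero => omega
    | succ k ih =>
      rcases Nat.eq_zero_or_pos k with rfl | hk'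
      · simp
      · rw [show (k+1) * n f = k * n f + n f from by ring, Function.iterate_add,
          ih hk', ← Function.iterate_add, hid f]
  rw [hc, show n f * c + n f * c = (c + c) * n f from by ring,
    show n f * c = c * n f from by ring, key _ (by omega), key _ hcpos]

/-- **Triviality of continuous-time multivalued dynamics on a finite set.**
If `X` is finite and `F : X × ℝ≥0 → Set X` satisfies the semigroup property
`F(x, t+s) = F(F(x,t), s)`, then `t ↦ F(x,t)` is constant on the positive reals. -/
theorem multivalued_semigroup_constant_on_pos {X : Type*} [Finite X]
    (F : X → NNReal → Set X)
    (hsg : ∀ (x : X) (t s : NNReal), F x (t + s) = ⋃ y ∈ F x t, F y s)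
    (x : X) (t s : NNReal) (ht : 0 < t) (hs : 0 < s) :
    F x t = F x s := by

  classical
  set G : NNReal → Set X → Set X := fun u A => ⋃ y ∈ A, F y u with hGdef
  -- semigroup property at the level of set maps
  have hcomp : ∀ (u v : NNReal) (A : Set X), G v (G u A) = G (u + v) A := by
    intro u v A
    ext w
    simp only [hGdef, Set.mem_iUnion, exists_prop]
    constructor
    · rintro ⟨z, ⟨y, hyA, hz⟩, hw⟩
      refine ⟨y, hyA, ?_⟩
      rw [hsg]
      exact Set.mem_biUnion hz hw
    · rintro ⟨y, hyA, hw⟩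
      rw [hsg] at hw
      obtain ⟨z, hz, hw⟩ := Set.mem_iUnion₂.1 hw
      exact ⟨z, ⟨y, hyA, hz⟩, hw⟩
  -- iterates of G u
  have hiter : ∀ (n : ℕ) (u : NNReal) (A : Set X),
      (G u)^[n + 1] A = G ((n + 1 : ℕ) * u) A := by
    intro n
    induction n with
    | zero => intro u A; simp
    | succ n ih =>
      intro u A
      have : (G u)^[n + 1 + 1] A = G u ((G u)^[n+1] A) := by
        rw [Function.iterate_succ_apply']
      rw [this, ih, hcomp, show ((n + 1 + 1 : ℕ) : NNReal) = (n + 1 : ℕ) + 1 from by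
        push_cast; ring]
      ring_nf
  -- a uniform idempotency exponent
  obtain ⟨N, hN0, hNid⟩ := exists_uniform_idem_iterate (Set X)
  -- G u is idempotent for u > 0
  have hidem : ∀ u : NNReal, 0 < u → ∀ A : Set X, G u (G u A) = G u A := by
    intro u hu A
    have hNne : (N : NNReal) ≠ 0 := by exact_mod_cast hN0.ne'
    have hmul : (N : NNReal) * (u / N) = u := by
      field_simp
    have h1 : ∀ B : Set X, G u B = (G (u / N))^[N] B := by
      intro B
      obtain ⟨M, rfl⟩ : ∃ M, N = M + 1 := ⟨N - 1, by omega⟩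
      rw [hiter, hmul]
    have h2 : G u (G u A) = (G (u / N))^[N + N] A := by
      rw [h1, h1, ← Function.iterate_add_apply]
    rw [h2, hNid, ← h1]
  -- multiples of s act like s
  have hks : ∀ u : NNReal, 0 < u → ∀ k : ℕ, ∀ A : Set X,
      G ((k + 1 : ℕ) * u) A = G u A := by
    intro u hu k
    induction k with
    | zero => intro A; simp
    | succ k ih =>
      intro A
      have : ((k + 1 + 1 : ℕ) : NNReal) * u = (k + 1 : ℕ) * u + u := by
        push_cast; ring
      rw [this, ← hcomp, ih, hidem u hu]
  -- archimedean choices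
  have harch : ∀ a b : NNReal, 0 < b → ∃ n : ℕ, a ≤ (n + 1 : ℕ) * b := by
    intro a b hb
    obtain ⟨n, hn⟩ := exists_nat_ge (a / b)
    refine ⟨n, ?_⟩
    have : a / b ≤ (n + 1 : ℕ) := le_trans hn (by exact_mod_cast Nat.le_succ n)
    calc a = a / b * b := by field_simp
      _ ≤ (n + 1 : ℕ) * b := mul_le_mul_left this b
  obtain ⟨n, hn⟩ := harch t s hs
  obtain ⟨m, hm⟩ := harch s t ht
  set r : NNReal := (n + 1 : ℕ) * s - t with hrdef
  set r' : NNReal := (m + 1 : ℕ) * t - s with hr'def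
  have hr : t + r = (n + 1 : ℕ) * s := add_tsub_cancel_of_le hn
  have hr' : s + r' = (m + 1 : ℕ) * t := add_tsub_cancel_of_le hm
  -- B = G r A where A = G t {x}, B = G s {x}
  have hB : G r (G t {x}) = G s {x} := by
    rw [hcomp, hr, hks s hs n]
  have hA : G r' (G s {x}) = G t {x} := by
    rw [hcomp, hr', hks t ht m]
  -- G s (G t {x}) = G t {x} :
  have key1 : G s (G t {x}) = G t {x} := by
    conv_lhs => rw [← hA]
    rw [hcomp, hcomp]
    have : s + (r' + s) = s + s + r' := by ring
    rw [this, ← hcomp, ← hcomp, hidem s hs, hcomp, hr', hks t ht m]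
  have key2 : G t (G s {x}) = G s {x} := by
    conv_lhs => rw [← hB]
    rw [hcomp, hcomp]
    have : t + (r + t) = t + t + r := by ring
    rw [this, ← hcomp, ← hcomp, hidem t ht, hcomp, hr, hks s hs n]
  have hFt : F x t = G t {x} := by simp [hGdef]
  have hFs : F x s = G s {x} := by simp [hGdef]
  rw [hFt, hFs, ← key1, ← key2, hcomp, hcomp, add_comm]
end

section
/- Let Y be a finite set and let F : Y × ℝ≥0 → Y be a (single-valued) map satisfying the semigroup property F(y, t+s) = F(F(y,t), s) for all y ∈ Y and all t, s ≥ 0. Then for every y ∈ Y the map t ↦ F(y,t) is constant on the positive reals, i.e., F(y,t) = F(y,s) for all t, s > 0. -/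
/-!
Write `G t := F(·, t)`. Then `t ↦ G t` is a homomorphism from `(ℝ≥0, +)` into the finite monoid
of self-maps of `Y`. In a finite monoid every `x ^ N` with `N = |M|!` is idempotent, and since every
`u` is `N • (u / N)`, each `G u` is idempotent; hence `G (u / 2) = G u`, so `G a = G ε` for arbitrarily
small `ε`. Splitting `b = (b - ε) + ε` with `ε < b` then gives `G a * G b = G b` for `b > 0`, and
commutativity makes `G a = G b` for `a, b > 0`.
-/

open NNReal

section FiniteMonoid

variable {M : Type*} [Monoid M]

theorem pow_add_mul_eq_pow_of_pow_eq_pow_add {x : M} {i p : ℕ} (h : x ^ i = x ^ (i + p))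
    (l : ℕ) : x ^ (i + l * p) = x ^ i := by
  induction l with
  | zero => simp
  | succ l ih => rw [add_mul, one_mul, ← add_assoc, pow_add, ih, ← pow_add, ← h]

theorem exists_pow_eq_pow_add_of_finite [Finite M] (x : M) :
    ∃ i p, 0 < p ∧ i + p ≤ Nat.card M ∧ x ^ i = x ^ (i + p) := by
  have hnotinj : ¬ Function.Injective fun k : Fin (Nat.card M + 1) => x ^ (k : ℕ) := fun hinj => by
    simpa using Nat.card_le_card_of_injective _ hinj
  obtain ⟨a, b, hab, hne⟩ : ∃ a b : Fin (Nat.card M + 1), x ^ (a : ℕ) = x ^ (b : ℕ) ∧ a ≠ b := by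
    simpa [Function.Injective] using hnotinj
  rcases Fin.lt_or_lt_of_ne hne with hlt | hlt
  · exact ⟨a, b - a, by omega, by omega, by rwa [Nat.add_sub_cancel' hlt.le]⟩
  · exact ⟨b, a - b, by omega, by omega, by rwa [Nat.add_sub_cancel' hlt.le, eq_comm]⟩

theorem isIdempotentElem_pow_factorial_card [Finite M] (x : M) :
    IsIdempotentElem (x ^ (Nat.card M).factorial) := by
  obtain ⟨i, p, hp, hip, hx⟩ := exists_pow_eq_pow_add_of_finite x
  set N := (Nat.card M).factorial
  have hiN : i ≤ N := (by omega : i ≤ Nat.card M).trans (Nat.self_le_factorial _)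
  have hpN : N / p * p = N := Nat.div_mul_cancel (Nat.dvd_factorial hp (by omega))
  calc x ^ N * x ^ N = x ^ (N - i) * x ^ (i + N / p * p) := by
        rw [hpN, ← pow_add, ← pow_add]; congr 1; omega
    _ = x ^ N := by rw [pow_add_mul_eq_pow_of_pow_eq_pow_add hx, ← pow_add, Nat.sub_add_cancel hiN]

end FiniteMonoid

section AdditiveToMultiplicative

variable {M : Type*} [Monoid M] {f : ℝ≥0 → M} (hf : ∀ a b, f (a + b) = f a * f b)
include hf

-- `f 0` is only idempotent, not necessarily `1`, so the exponent must be positive.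
theorem map_nat_succ_mul_eq_pow (u : ℝ≥0) (n : ℕ) : f ((n + 1) * u) = f u ^ (n + 1) := by
  induction n with
  | zero => simp
  | succ n ih => rw [pow_succ, ← ih, ← hf, Nat.cast_succ]; congr 1; ring

theorem isIdempotentElem_map_of_finite [Finite M] (u : ℝ≥0) : IsIdempotentElem (f u) := by
  obtain ⟨n, hn⟩ : ∃ n : ℕ, (Nat.card M).factorial = n + 1 :=
    Nat.exists_eq_succ_of_ne_zero (Nat.factorial_ne_zero _)
  have hu : u = (n + 1) * (u / (n + 1)) := (mul_div_cancel₀ u (Nat.cast_add_one_ne_zero n)).symm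
  rw [hu, map_nat_succ_mul_eq_pow hf, ← hn]
  exact isIdempotentElem_pow_factorial_card _

theorem map_div_two_pow (hidem : ∀ u, IsIdempotentElem (f u)) (a : ℝ≥0) (n : ℕ) :
    f (a / 2 ^ n) = f a := by
  induction n with
  | zero => simp
  | succ n ih => rw [← ih, pow_succ, ← div_div, ← (hidem _).eq, ← hf, add_halves]

theorem map_mul_map_eq_right (hidem : ∀ u, IsIdempotentElem (f u)) (a : ℝ≥0) {b : ℝ≥0}
    (hb : 0 < b) : f a * f b = f b := by
  obtain ⟨n, hn⟩ := pow_unbounded_of_one_lt (a / b) one_lt_two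
  set ε := a / 2 ^ n
  have hεb : ε < b := by
    rwa [div_lt_iff₀ hb, ← div_lt_iff₀' (pow_pos two_pos n)] at hn
  have hb_split : f b = f ε * f (b - ε) := by rw [← hf, add_tsub_cancel_of_le hεb.le]
  rw [hb_split, ← map_div_two_pow hf hidem a n, ← mul_assoc, (hidem ε).eq]

theorem map_eq_of_pos [Finite M] {a b : ℝ≥0} (ha : 0 < a) (hb : 0 < b) : f a = f b := by
  have hidem := isIdempotentElem_map_of_finite hf
  calc f a = f b * f a := (map_mul_map_eq_right hf hidem b ha).symm
    _ = f a * f b := by rw [← hf, ← hf, add_comm]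
    _ = f b := map_mul_map_eq_right hf hidem a hb

end AdditiveToMultiplicative

/-- **Triviality of continuous-time single-valued dynamics on a finite set.**
If `Y` is finite and `F : Y × ℝ≥0 → Y` satisfies the semigroup property
`F(y, t+s) = F(F(y,t), s)`, then `t ↦ F(y,t)` is constant on the positive reals. -/
theorem singlevalued_semigroup_constant_on_pos {Y : Type*} [Finite Y]
    (F : Y → NNReal → Y)
    (hsg : ∀ (y : Y) (t s : NNReal), F y (t + s) = F (F y t) s)
    (y : Y) (t s : NNReal) (ht : 0 < t) (hs : 0 < s) :
    F y t = F y s := by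
  have : Finite (Function.End Y) := inferInstanceAs (Finite (Y → Y))
  let G : ℝ≥0 → Function.End Y := fun u z => F z u
  have hG : ∀ a b, G (a + b) = G a * G b := fun a b => funext fun z => by
    change F z (a + b) = F (F z b) a
    rw [← hsg, add_comm]
  exact congrFun (map_eq_of_pos hG ht hs) y
end

section
/- If M and N are two isolating sets for the same isolated invariant set S, then their intersection M ∩ N is also an isolating set for S. -/
open Set

namespace MV

variable {X : Type*}

/-- The image of a set under a multivalued map `F : X → Set X`. -/
def image (F : X → Set X) (A : Set X) : Set X := ⋃ x ∈ A, F x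

/-- `F` is lower semicontinuous with closed values (characterization valid for
finite `T₀` spaces): each value is closed, and `x' ∈ cl {x}` implies `F x' ⊆ F x`. -/
def LscClosed [TopologicalSpace X] (F : X → Set X) : Prop :=
  (∀ x, IsClosed (F x)) ∧ ∀ x x' : X, x' ∈ closure {x} → F x' ⊆ F x

/-- `σ 0, σ 1, …, σ n` is a path in `A` (for `F`). -/
def IsPathIn (F : X → Set X) (A : Set X) (n : ℕ) (σ : ℕ → X) : Prop :=
  (∀ j ≤ n, σ j ∈ A) ∧ ∀ j < n, σ (j + 1) ∈ F (σ j)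

/-- `γ : ℤ → X` is a full solution in `A` (for `F`). -/
def IsFullSolution (F : X → Set X) (A : Set X) (γ : ℤ → X) : Prop :=
  (∀ i, γ i ∈ A) ∧ ∀ i, γ (i + 1) ∈ F (γ i)

/-- The invariant part `Inv(A)`: points of `A` lying on a full solution in `A`. -/
def invPart (F : X → Set X) (A : Set X) : Set X :=
  {x | ∃ γ, IsFullSolution F A γ ∧ ∃ i, γ i = x}

/-- `S` is invariant: every point of `S` lies on a full solution in `S`. -/
def IsInvariant (F : X → Set X) (S : Set X) : Prop :=
  ∀ x ∈ S, ∃ γ, IsFullSolution F S γ ∧ ∃ i, γ i = x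

/-- `N` is an isolating set for `S`: it is closed, every path in `N` with both
endpoints in `S` has all its values in `S` (IS1), and `S ∩ cl (F(S) \ N) = ∅` (IS2). -/
def IsIsolatingSet [TopologicalSpace X] (F : X → Set X) (S N : Set X) : Prop :=
  IsClosed N ∧
  (∀ n σ, IsPathIn F N n σ → σ 0 ∈ S → σ n ∈ S → ∀ j ≤ n, σ j ∈ S) ∧
  S ∩ closure (image F S \ N) = ∅

/-- `S` is an isolated invariant set: it is invariant and admits an isolating set. -/
def IsIsolatedInvariantSet [TopologicalSpace X] (F : X → Set X) (S : Set X) : Prop :=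
  IsInvariant F S ∧ ∃ N, IsIsolatingSet F S N

/-- `Inv⁻(N,S)`: points of `N` reachable from `S` by a path in `N`. -/
def invMinus (F : X → Set X) (N S : Set X) : Set X :=
  {y ∈ N | ∃ n σ, IsPathIn F N n σ ∧ σ 0 ∈ S ∧ σ n = y}

/-- `Inv⁺(N,S)`: points of `N` from which `S` is reachable by a path in `N`. -/
def invPlus (F : X → Set X) (N S : Set X) : Set X :=
  {y ∈ N | ∃ n σ, IsPathIn F N n σ ∧ σ 0 = y ∧ σ n ∈ S}

/-- `(P₁, P₂)` is an index pair for `S` in the isolating set `N`: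
closed sets `P₂ ⊆ P₁ ⊆ N` with (IP1) `F(Pᵢ) ∩ N ⊆ Pᵢ`,
(IP2) `P₁ ∩ cl (F(P₁) \ N) ⊆ P₂`, and (IP3) `S = Inv (P₁ \ P₂)`. -/
def IsIndexPair [TopologicalSpace X] (F : X → Set X) (S N P₁ P₂ : Set X) : Prop :=
  IsClosed P₁ ∧ IsClosed P₂ ∧ P₂ ⊆ P₁ ∧ P₁ ⊆ N ∧
  image F P₁ ∩ N ⊆ P₁ ∧ image F P₂ ∩ N ⊆ P₂ ∧
  P₁ ∩ closure (image F P₁ \ N) ⊆ P₂ ∧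
  S = invPart F (P₁ \ P₂)

/-- Reachability in the `F`-digraph: a directed path (possibly of length zero)
from `x` to `y`. -/
def Reach (F : X → Set X) (x y : X) : Prop :=
  ∃ n σ, IsPathIn F Set.univ n σ ∧ σ 0 = x ∧ σ n = y

/-- The strongly connected component of `x` in the `F`-digraph. -/
def scc (F : X → Set X) (x : X) : Set X :=
  {y | Reach F x y ∧ Reach F y x}

/-- `M` is a nontrivial strongly connected component of the `F`-digraph. -/
def IsNontrivialSCC (F : X → Set X) (M : Set X) : Prop :=
  (∃ x, M = scc F x) ∧ ¬∃ x, M = {x} ∧ x ∉ F x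

end MV

/-- **Intersection of isolating sets.** If `M` and `N` are isolating sets for the same
isolated invariant set `S`, then `M ∩ N` is also an isolating set for `S`. -/
theorem isolatingSet_inter {X : Type*} [TopologicalSpace X] [Finite X] [T0Space X]
    (F : X → Set X) (hF : MV.LscClosed F)
    (S M N : Set X) (hS : MV.IsInvariant F S)
    (hM : MV.IsIsolatingSet F S M) (hN : MV.IsIsolatingSet F S N) :
    MV.IsIsolatingSet F S (M ∩ N) := by
  obtain ⟨hMc, hM1, hM2⟩ := hM
  obtain ⟨hNc, hN1, hN2⟩ := hN
  refine ⟨hMc.inter hNc, ?_, ?_⟩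
  · intro n σ hσ h0 hn
    exact hM1 n σ ⟨fun j hj => (hσ.1 j hj).1, hσ.2⟩ h0 hn
  · have hsplit : MV.image F S \ (M ∩ N) =
        (MV.image F S \ M) ∪ (MV.image F S \ N) := by
      ext x
      simp only [Set.mem_diff, Set.mem_inter_iff, Set.mem_union]
      tauto
    rw [hsplit, closure_union, Set.inter_union_distrib_left, hM2, hN2,
      Set.union_empty]
end

section
/- Every nontrivial strongly connected component M of the F-digraph G_F is an isolated invariant set for F, and the whole space X is an isolating set for M. In particular, every path (in the sense of F) whose two endpoints lie in M has all of its values in M. -/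
open Set

namespace MV

variable {X : Type*}

lemma reach_refl' (F : X → Set X) (x : X) : Reach F x x :=
  ⟨0, fun _ => x, ⟨fun _ _ => trivial, fun j hj => absurd hj (Nat.not_lt_zero j)⟩, rfl, rfl⟩

lemma path_concat' {F : X → Set X} {m n : ℕ} {σ τ : ℕ → X}
    (hσ : IsPathIn F Set.univ m σ) (hτ : IsPathIn F Set.univ n τ) (h : τ 0 = σ m) :
    ∃ ρ, IsPathIn F Set.univ (m + n) ρ ∧ ρ 0 = σ 0 ∧ ρ (m + n) = τ n := by
  refine ⟨fun j => if j < m then σ j else τ (j - m), ⟨fun _ _ => trivial, ?_⟩, ?_, ?_⟩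
  · intro j hj
    rcases lt_trichotomy (j + 1) m with h1 | h1 | h1
    · have h2 : j < m := by omega
      simpa [h1, h2] using hσ.2 j (by omega)
    · have h2 : j < m := by omega
      simp only [if_pos h2, if_neg (by omega : ¬ j + 1 < m)]
      have he : j + 1 - m = 0 := by omega
      rw [he, h]
      have hst := hσ.2 j (by omega)
      rwa [h1] at hst
    · have h2 : ¬ j < m := by omega
      simp only [if_neg h2, if_neg (by omega : ¬ j + 1 < m)]
      have he : j + 1 - m = (j - m) + 1 := by omega
      rw [he]
      exact hτ.2 (j - m) (by omega)
  · by_cases h0 : 0 < m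
    · simp [h0]
    · have hm : m = 0 := by omega
      subst hm
      simpa using h
  · simp only [if_neg (by omega : ¬ m + n < m), Nat.add_sub_cancel_left]

lemma reach_trans' {F : X → Set X} {x y z : X} (h1 : Reach F x y) (h2 : Reach F y z) :
    Reach F x z := by
  obtain ⟨m, σ, hσ, hσ0, hσm⟩ := h1
  obtain ⟨n, τ, hτ, hτ0, hτn⟩ := h2
  obtain ⟨ρ, hρ, h0, hmn⟩ := path_concat' hσ hτ (by rw [hτ0, hσm])
  exact ⟨m + n, ρ, hρ, by rw [h0, hσ0], by rw [hmn, hτn]⟩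

lemma reach_of_path' {F : X → Set X} {n : ℕ} {σ : ℕ → X} (h : IsPathIn F Set.univ n σ)
    {i j : ℕ} (hij : i ≤ j) (hj : j ≤ n) : Reach F (σ i) (σ j) := by
  refine ⟨j - i, fun k => σ (i + k), ⟨fun _ _ => trivial, fun k hk => ?_⟩, by simp, ?_⟩
  · show σ (i + (k + 1)) ∈ F (σ (i + k))
    have he : i + (k + 1) = (i + k) + 1 := by omega
    rw [he]
    exact h.2 (i + k) (by omega)
  · show σ (i + (j - i)) = σ j
    congr 1
    omega

end MV

/-- **Nontrivial strongly connected components are isolated invariant sets.**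
Every nontrivial strongly connected component `M` of the `F`-digraph is invariant,
the whole space is an isolating set for `M`, and every path with both endpoints in `M`
has all its values in `M`. -/
theorem nontrivialSCC_isolatedInvariant {X : Type*} [TopologicalSpace X] [Finite X] [T0Space X]
    (F : X → Set X) (hF : MV.LscClosed F)
    (M : Set X) (hM : MV.IsNontrivialSCC F M) :
    MV.IsInvariant F M ∧ MV.IsIsolatingSet F M Set.univ ∧
    (∀ n σ, MV.IsPathIn F Set.univ n σ → σ 0 ∈ M → σ n ∈ M → ∀ j ≤ n, σ j ∈ M) := by
  obtain ⟨⟨x₀, rfl⟩, hnt⟩ := hM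
  have hx₀ : x₀ ∈ MV.scc F x₀ := ⟨MV.reach_refl' F x₀, MV.reach_refl' F x₀⟩
  have key : ∀ n σ, MV.IsPathIn F Set.univ n σ → σ 0 ∈ MV.scc F x₀ → σ n ∈ MV.scc F x₀ →
      ∀ j ≤ n, σ j ∈ MV.scc F x₀ := by
    intro n σ hσ h0 hn j hj
    exact ⟨MV.reach_trans' h0.1 (MV.reach_of_path' hσ (Nat.zero_le j) hj),
           MV.reach_trans' (MV.reach_of_path' hσ hj le_rfl) hn.2⟩
  have hinv : MV.IsInvariant F (MV.scc F x₀) := by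
    intro x hx
    obtain ⟨L, hL, c, hc, hc0, hcL⟩ :
        ∃ L, 0 < L ∧ ∃ c, MV.IsPathIn F Set.univ L c ∧ c 0 = x ∧ c L = x := by
      by_cases hsing : ∀ z ∈ MV.scc F x₀, z = x
      · have hMx : MV.scc F x₀ = {x} := Set.eq_singleton_iff_unique_mem.2 ⟨hx, hsing⟩
        have hxF : x ∈ F x := by
          by_contra h
          exact hnt ⟨x, hMx, h⟩
        exact ⟨1, one_pos, fun _ => x, ⟨fun _ _ => trivial, fun j hj => hxF⟩, rfl, rfl⟩
      · push_neg at hsing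
        obtain ⟨z, hz, hzx⟩ := hsing
        obtain ⟨m, σ, hσ, hσ0, hσm⟩ := MV.reach_trans' hx.2 hz.1
        obtain ⟨n, τ, hτ, hτ0, hτn⟩ := MV.reach_trans' hz.2 hx.1
        obtain ⟨ρ, hρ, hρ0, hρmn⟩ := MV.path_concat' hσ hτ (by rw [hτ0, hσm])
        refine ⟨m + n, ?_, ρ, hρ, by rw [hρ0, hσ0], by rw [hρmn, hτn]⟩
        rcases Nat.eq_zero_or_pos m with hm | hm
        · exfalso
          apply hzx
          rw [← hσm, hm, hσ0]
        · omega
    have hmem : ∀ k ≤ L, c k ∈ MV.scc F x₀ := by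
      intro k hk
      exact key L c hc (by rw [hc0]; exact hx) (by rw [hcL]; exact hx) k hk
    have hLZ : 0 < (L : ℤ) := by exact_mod_cast hL
    have hbnd : ∀ i : ℤ, 0 ≤ i % (L : ℤ) ∧ i % (L : ℤ) < (L : ℤ) := fun i =>
      ⟨Int.emod_nonneg i (ne_of_gt hLZ), Int.emod_lt_of_pos i hLZ⟩
    refine ⟨fun i => c ((i % (L : ℤ)).toNat), ⟨fun i => ?_, fun i => ?_⟩, 0, ?_⟩
    · have := hbnd i
      exact hmem _ (by omega)
    · show c (((i + 1) % (L : ℤ)).toNat) ∈ F (c ((i % (L : ℤ)).toNat))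
      have h1 := hbnd i
      set k := (i % (L : ℤ)).toNat with hkdef
      have hr : i % (L : ℤ) = (k : ℤ) := by omega
      have hstep : (i + 1) % (L : ℤ) = ((k : ℤ) + 1) % (L : ℤ) := by
        conv_lhs => rw [← Int.emod_add_mul_ediv i (L : ℤ)]
        rw [hr, add_right_comm]
        exact Int.add_mul_emod_self_left _ _ _
      have hkL : k < L := by omega
      by_cases hk1 : k + 1 < L
      · have heq : ((i + 1) % (L : ℤ)).toNat = k + 1 := by
          rw [hstep, Int.emod_eq_of_lt (by positivity) (by exact_mod_cast hk1)]
          omega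
        rw [heq]
        exact hc.2 k hkL
      · have hk1' : k + 1 = L := by omega
        have heq : ((i + 1) % (L : ℤ)).toNat = 0 := by
          rw [hstep]
          have hcast : (k : ℤ) + 1 = (L : ℤ) := by exact_mod_cast hk1'
          rw [hcast, Int.emod_self]
          rfl
        rw [heq, hc0, ← hcL]
        have := hc.2 k hkL
        rwa [hk1'] at this
    · show c (((0 : ℤ) % (L : ℤ)).toNat) = x
      have h0 : ((0 : ℤ) % (L : ℤ)).toNat = 0 := by simp
      rw [h0, hc0]
  refine ⟨hinv, ⟨isClosed_univ, key, by simp⟩, key⟩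
end

section
/- Let {M_p}_{p∈P} be the family of nontrivial strongly connected components of the F-digraph G_F, and for distinct components define q > r iff there exists a directed path in G_F from a vertex of M_q to a vertex of M_r. Then > is a strict partial order on P, and for every full solution γ : ℤ → X either all values of γ are contained in a single component M_p, or there exist indices q > r in P and integers t_q, t_r such that γ(t) ∈ M_q for all t ≤ t_q and γ(t) ∈ M_r for all t ≥ t_r. Consequently {M_p}_{p∈P} is a Morse decomposition of X. -/
open Set

namespace MVAux

open MV

variable {X : Type*} {F : X → Set X}

lemma reach_refl (F : X → Set X) (x : X) : Reach F x x :=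
  ⟨0, fun _ => x, ⟨fun _ _ => Set.mem_univ _, fun j hj => absurd hj (Nat.not_lt_zero j)⟩, rfl, rfl⟩

lemma path_concat {n m : ℕ} {σ τ : ℕ → X} (hσ : IsPathIn F Set.univ n σ)
    (hτ : IsPathIn F Set.univ m τ) (h : τ 0 = σ n) :
    ∃ ρ, IsPathIn F Set.univ (n + m) ρ ∧ ρ 0 = σ 0 ∧ ρ (n + m) = τ m := by
  refine ⟨fun j => if j < n then σ j else τ (j - n), ⟨fun _ _ => Set.mem_univ _, ?_⟩, ?_, ?_⟩
  · intro j hj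
    rcases lt_trichotomy (j + 1) n with hc | hc | hc
    · simp only [if_pos (by omega : j < n), if_pos hc]
      exact hσ.2 j (by omega)
    · simp only [if_pos (by omega : j < n), if_neg (by omega : ¬ j + 1 < n)]
      rw [show j + 1 - n = 0 by omega, h, ← hc]
      exact hσ.2 j (by omega)
    · simp only [if_neg (by omega : ¬ j < n), if_neg (by omega : ¬ j + 1 < n)]
      rw [show j + 1 - n = (j - n) + 1 by omega]
      exact hτ.2 (j - n) (by omega)
  · rcases Nat.eq_zero_or_pos n with hc | hc
    · simp only [if_neg (by omega : ¬ (0:ℕ) < n)]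
      rw [show (0:ℕ) - n = 0 by omega, h, hc]
    · simp only [if_pos hc]
  · simp only [if_neg (by omega : ¬ n + m < n)]
    rw [show n + m - n = m by omega]

lemma reach_trans {x y z : X} (h1 : Reach F x y) (h2 : Reach F y z) : Reach F x z := by
  obtain ⟨n, σ, hσ, hσ0, hσn⟩ := h1
  obtain ⟨m, τ, hτ, hτ0, hτm⟩ := h2
  obtain ⟨ρ, hρ, h0, hnm⟩ := path_concat hσ hτ (by rw [hτ0, hσn])
  exact ⟨n + m, ρ, hρ, by rw [h0, hσ0], by rw [hnm, hτm]⟩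

lemma reach_of_path {n : ℕ} {σ : ℕ → X} (hσ : IsPathIn F Set.univ n σ)
    {i j : ℕ} (hij : i ≤ j) (hjn : j ≤ n) : Reach F (σ i) (σ j) := by
  refine ⟨j - i, fun k => σ (i + k), ⟨fun _ _ => Set.mem_univ _, ?_⟩, by simp, ?_⟩
  · intro k hk
    show σ (i + (k + 1)) ∈ F (σ (i + k))
    rw [show i + (k + 1) = (i + k) + 1 by omega]
    exact hσ.2 (i + k) (by omega)
  · show σ (i + (j - i)) = σ j
    rw [show i + (j - i) = j by omega]

lemma mem_scc_self (F : X → Set X) (x : X) : x ∈ scc F x :=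
  ⟨reach_refl F x, reach_refl F x⟩

lemma scc_eq_of_mem {a x : X} (h : x ∈ scc F a) : scc F a = scc F x := by
  obtain ⟨hax, hxa⟩ := h
  ext y
  exact ⟨fun ⟨h1, h2⟩ => ⟨reach_trans hxa h1, reach_trans h2 hax⟩,
    fun ⟨h1, h2⟩ => ⟨reach_trans hax h1, reach_trans h2 hxa⟩⟩

lemma sol_reach {γ : ℤ → X} (hγ : IsFullSolution F Set.univ γ) {s t : ℤ} (h : s ≤ t) :
    Reach F (γ s) (γ t) := by
  refine ⟨(t - s).toNat, fun j => γ (s + j), ⟨fun _ _ => Set.mem_univ _, ?_⟩, by simp, ?_⟩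
  · intro j hj
    show γ (s + (↑(j + 1) : ℤ)) ∈ F (γ (s + j))
    have he : s + (↑(j + 1) : ℤ) = (s + j) + 1 := by push_cast; ring
    rw [he]; exact hγ.2 (s + j)
  · show γ (s + ((t - s).toNat : ℤ)) = γ t
    rw [show s + ((t - s).toNat : ℤ) = t by omega]

lemma sol_mem_scc {γ : ℤ → X} (hγ : IsFullSolution F Set.univ γ) {a : X} {t₀ t₁ t : ℤ}
    (h₀ : t₀ ≤ t) (h₁ : t ≤ t₁) (m₀ : γ t₀ ∈ scc F a) (m₁ : γ t₁ ∈ scc F a) :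
    γ t ∈ scc F a :=
  ⟨reach_trans m₀.1 (sol_reach hγ h₀), reach_trans (sol_reach hγ h₁) m₁.2⟩

/-- A cycle of positive length through any point of a nontrivial scc, staying in it. -/
lemma cycle_of_nontrivial {M : Set X} (hM : IsNontrivialSCC F M) {x : X} (hx : x ∈ M) :
    ∃ n σ, 0 < n ∧ IsPathIn F M n σ ∧ σ 0 = x ∧ σ n = x := by
  obtain ⟨⟨a, rfl⟩, hnt⟩ := hM
  have hMx : scc F a = scc F x := scc_eq_of_mem hx
  by_cases hy : ∃ y ∈ scc F a, y ≠ x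
  · obtain ⟨y, hyM, hyx⟩ := hy
    have hyx' : y ∈ scc F x := hMx ▸ hyM
    obtain ⟨n1, σ1, hσ1, h10, h1n⟩ := hyx'.1
    obtain ⟨n2, σ2, hσ2, h20, h2n⟩ := hyx'.2
    have hn1 : 0 < n1 := by
      rcases Nat.eq_zero_or_pos n1 with hc | hc
      · exact absurd (by rw [← h1n, hc, h10] : y = x) hyx
      · exact hc
    obtain ⟨ρ, hρ, hρ0, hρn⟩ := path_concat hσ1 hσ2 (by rw [h20, h1n])
    refine ⟨n1 + n2, ρ, by omega, ⟨?_, hρ.2⟩, by rw [hρ0, h10], by rw [hρn, h2n]⟩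
    intro j hj
    rw [hMx]
    exact ⟨(by rw [← h10, ← hρ0] at *; exact reach_of_path hρ (Nat.zero_le j) hj),
      reach_trans (by rw [← h2n, ← hρn]; exact reach_of_path hρ hj le_rfl)
        (reach_refl F x)⟩
  · push_neg at hy
    have hMsing : scc F a = {x} := Set.eq_singleton_iff_unique_mem.mpr ⟨hx, hy⟩
    have hxF : x ∈ F x := by
      by_contra h
      exact hnt ⟨x, hMsing, h⟩
    exact ⟨1, fun _ => x, Nat.one_pos, ⟨fun _ _ => hx, fun j _ => hxF⟩, rfl, rfl⟩

end MVAux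

namespace MVAux
open MV
variable {X : Type*} {F : X → Set X}

lemma nontrivial_of_return {γ : ℤ → X} (hγ : IsFullSolution F Set.univ γ) {a : X} {t1 t2 : ℤ}
    (h12 : t1 < t2) (h1 : γ t1 = a) (h2 : γ t2 = a) : IsNontrivialSCC F (scc F a) := by
  refine ⟨⟨a, rfl⟩, ?_⟩
  rintro ⟨z, hz, hzF⟩
  have haz : a = z := by
    have := mem_scc_self F a
    rw [hz] at this; exact this
  have hmem : γ (t1 + 1) ∈ scc F a :=
    sol_mem_scc (t₀ := t1) (t₁ := t2) hγ (by omega) (by omega)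
      (by rw [h1]; exact mem_scc_self F a) (by rw [h2]; exact mem_scc_self F a)
  rw [hz] at hmem
  have hFz : γ (t1 + 1) ∈ F z := by
    have := hγ.2 t1
    rw [h1, haz] at this; exact this
  rw [hmem] at hFz
  exact hzF hFz

lemma invariant_of_nontrivial {M : Set X} (hM : IsNontrivialSCC F M) : IsInvariant F M := by
  intro x hx
  obtain ⟨n, σ, hn, hσ, h0, hne⟩ := cycle_of_nontrivial hM hx
  have hnz : (0:ℤ) < (n:ℤ) := by exact_mod_cast hn
  have hjlt : ∀ t : ℤ, (t % (n:ℤ)).toNat < n := by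
    intro t
    have h1 := Int.emod_nonneg t (by omega : (n:ℤ) ≠ 0)
    have h2 := Int.emod_lt_of_pos t hnz
    omega
  refine ⟨fun t => σ ((t % (n:ℤ)).toNat), ⟨fun t => hσ.1 _ (le_of_lt (hjlt t)), ?_⟩, 0, ?_⟩
  · intro t
    set j := (t % (n:ℤ)).toNat with hjdef
    have hjn := hjlt t
    have hcast : ((j:ℤ)) = t % (n:ℤ) :=
      Int.toNat_of_nonneg (Int.emod_nonneg t (by omega))
    have key : (t + 1) % (n:ℤ) = ((j:ℤ) + 1) % (n:ℤ) := by
      rw [hcast, Int.add_emod t 1, Int.add_emod (t % (n:ℤ)) 1,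
        Int.emod_emod_of_dvd t dvd_rfl]
    show σ (((t + 1) % (n:ℤ)).toNat) ∈ F (σ j)
    rcases lt_or_eq_of_le (Nat.succ_le_of_lt hjn) with hc | hc
    · have hval : (t + 1) % (n:ℤ) = ((j:ℤ) + 1) := by
        rw [key]; exact Int.emod_eq_of_lt (by omega) (by exact_mod_cast hc)
      rw [show ((t + 1) % (n:ℤ)).toNat = j + 1 by omega]
      exact hσ.2 j hjn
    · have hval : (t + 1) % (n:ℤ) = 0 := by
        rw [key, show ((j:ℤ) + 1) = (n:ℤ) by exact_mod_cast hc]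
        exact Int.emod_self
      rw [show ((t + 1) % (n:ℤ)).toNat = 0 by omega, h0, ← hne, ← hc]
      exact hσ.2 j hjn
  · show σ (((0:ℤ) % (n:ℤ)).toNat) = x
    rw [Int.zero_emod]
    exact h0

end MVAux

open MVAux

set_option linter.unusedVariables false

/-- **Morse decomposition via strongly connected components.**
The nontrivial strongly connected components, ordered by `Mq > Mr` iff they are distinct
and some vertex of `Mr` is reachable from a vertex of `Mq`, form a strictly partially
ordered family of mutually disjoint nonempty isolated invariant sets, and every full
solution either stays in a single component or goes from a strictly larger component to a
strictly smaller one; i.e. they form a Morse decomposition of `X`. -/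
theorem scc_morseDecomposition {X : Type*} [TopologicalSpace X] [Finite X] [T0Space X]
    (F : X → Set X) (hF : MV.LscClosed F) :
    (∀ M, MV.IsNontrivialSCC F M →
      ¬(M ≠ M ∧ ∃ x ∈ M, ∃ y ∈ M, MV.Reach F x y)) ∧
    (∀ M₁ M₂ M₃, MV.IsNontrivialSCC F M₁ → MV.IsNontrivialSCC F M₂ →
      MV.IsNontrivialSCC F M₃ →
      (M₁ ≠ M₂ ∧ ∃ x ∈ M₁, ∃ y ∈ M₂, MV.Reach F x y) →
      (M₂ ≠ M₃ ∧ ∃ x ∈ M₂, ∃ y ∈ M₃, MV.Reach F x y) →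
      (M₁ ≠ M₃ ∧ ∃ x ∈ M₁, ∃ y ∈ M₃, MV.Reach F x y)) ∧
    (∀ M, MV.IsNontrivialSCC F M → M.Nonempty) ∧
    (∀ M₁ M₂, MV.IsNontrivialSCC F M₁ → MV.IsNontrivialSCC F M₂ → M₁ ≠ M₂ →
      Disjoint M₁ M₂) ∧
    (∀ M, MV.IsNontrivialSCC F M → MV.IsIsolatedInvariantSet F M) ∧
    (∀ γ : ℤ → X, MV.IsFullSolution F Set.univ γ →
      (∃ M, MV.IsNontrivialSCC F M ∧ ∀ t, γ t ∈ M) ∨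
      (∃ Mq Mr, MV.IsNontrivialSCC F Mq ∧ MV.IsNontrivialSCC F Mr ∧
        (Mq ≠ Mr ∧ ∃ x ∈ Mq, ∃ y ∈ Mr, MV.Reach F x y) ∧
        ∃ tq tr : ℤ, (∀ t ≤ tq, γ t ∈ Mq) ∧ (∀ t, tr ≤ t → γ t ∈ Mr))) := by
  refine ⟨fun M _ h => h.1 rfl, ?_, ?_, ?_, ?_, ?_⟩
  · -- transitivity
    rintro M₁ M₂ M₃ h1 h2 h3 ⟨h12, x, hx, y, hy, hxy⟩ ⟨h23, x', hx', y', hy', hxy'⟩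
    obtain ⟨a1, rfl⟩ := h1.1
    obtain ⟨a2, rfl⟩ := h2.1
    obtain ⟨a3, rfl⟩ := h3.1
    have hxy'' : MV.Reach F x y' :=
      reach_trans hxy (reach_trans (reach_trans hy.2 hx'.1) hxy')
    refine ⟨?_, x, hx, y', hy', hxy''⟩
    intro he
    apply h12
    have hy'1 : y' ∈ MV.scc F a1 := by rw [he]; exact hy'
    have hyx : MV.Reach F y x :=
      reach_trans (reach_trans hy.2 hx'.1) (reach_trans hxy' (reach_trans hy'1.2 hx.1))
    calc MV.scc F a1 = MV.scc F x := scc_eq_of_mem hx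
      _ = MV.scc F y := scc_eq_of_mem ⟨hxy, hyx⟩
      _ = MV.scc F a2 := (scc_eq_of_mem hy).symm
  · -- nonempty
    rintro M ⟨⟨a, rfl⟩, -⟩
    exact ⟨a, mem_scc_self F a⟩
  · -- disjoint
    intro M₁ M₂ h1 h2 hne
    obtain ⟨a1, rfl⟩ := h1.1
    obtain ⟨a2, rfl⟩ := h2.1
    rw [Set.disjoint_left]
    intro x hx1 hx2
    exact hne ((scc_eq_of_mem hx1).trans (scc_eq_of_mem hx2).symm)
  · -- isolated invariant set
    intro M hM
    refine ⟨invariant_of_nontrivial hM, Set.univ, isClosed_univ, ?_, by simp⟩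
    obtain ⟨a, rfl⟩ := hM.1
    intro n σ hσ h0 hn j hj
    have hσu : MV.IsPathIn F Set.univ n σ := ⟨fun _ _ => Set.mem_univ _, hσ.2⟩
    exact ⟨reach_trans h0.1 (reach_of_path hσu (Nat.zero_le j) hj),
      reach_trans (reach_of_path hσu hj le_rfl) hn.2⟩
  · -- dichotomy for full solutions
    intro γ hγ
    haveI : Fintype X := Fintype.ofFinite X
    haveI : Nonempty X := ⟨γ 0⟩
    set R := {x : X | ∀ s : ℤ, ∃ t ≤ s, γ t = x} with hRdef
    set S := {x : X | ∀ s : ℤ, ∃ t, s ≤ t ∧ γ t = x} with hSdef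
    have hpast : ∃ tq : ℤ, ∀ t ≤ tq, γ t ∈ R := by
      have hch : ∀ x : X, ∃ s : ℤ, x ∉ R → ∀ t ≤ s, γ t ≠ x := by
        intro x
        by_cases hx : x ∈ R
        · exact ⟨0, fun h => absurd hx h⟩
        · simp only [hRdef, Set.mem_setOf_eq] at hx
          push_neg at hx
          obtain ⟨s, hs⟩ := hx
          exact ⟨s, fun _ => hs⟩
      choose s hs using hch
      refine ⟨Finset.univ.inf' Finset.univ_nonempty s, fun t ht => ?_⟩
      by_contra hne
      exact hs (γ t) hne t (le_trans ht (Finset.inf'_le s (Finset.mem_univ _))) rfl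
    have hfut : ∃ tr : ℤ, ∀ t, tr ≤ t → γ t ∈ S := by
      have hch : ∀ x : X, ∃ s : ℤ, x ∉ S → ∀ t, s ≤ t → γ t ≠ x := by
        intro x
        by_cases hx : x ∈ S
        · exact ⟨0, fun h => absurd hx h⟩
        · simp only [hSdef, Set.mem_setOf_eq] at hx
          push_neg at hx
          obtain ⟨s, hs⟩ := hx
          exact ⟨s, fun _ t ht => hs t ht⟩
      choose s hs using hch
      refine ⟨Finset.univ.sup' Finset.univ_nonempty s, fun t ht => ?_⟩
      by_contra hne
      exact hs (γ t) hne t (le_trans (Finset.le_sup' s (Finset.mem_univ _)) ht) rfl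
    obtain ⟨tq, htq⟩ := hpast
    obtain ⟨tr, htr⟩ := hfut
    have ha : γ tq ∈ R := htq tq le_rfl
    have hb : γ tr ∈ S := htr tr le_rfl
    have hreachR : ∀ x ∈ R, ∀ y ∈ R, MV.Reach F x y := by
      intro x hx y hy
      obtain ⟨t2, -, h2⟩ := hy 0
      obtain ⟨t1, ht1, h1⟩ := hx t2
      rw [← h1, ← h2]
      exact sol_reach hγ ht1
    have hreachS : ∀ x ∈ S, ∀ y ∈ S, MV.Reach F x y := by
      intro x hx y hy
      obtain ⟨t1, -, h1⟩ := hx 0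
      obtain ⟨t2, ht2, h2⟩ := hy t1
      rw [← h1, ← h2]
      exact sol_reach hγ ht2
    have hRsub : ∀ x ∈ R, x ∈ MV.scc F (γ tq) :=
      fun x hx => ⟨hreachR _ ha _ hx, hreachR _ hx _ ha⟩
    have hSsub : ∀ x ∈ S, x ∈ MV.scc F (γ tr) :=
      fun x hx => ⟨hreachS _ hb _ hx, hreachS _ hx _ hb⟩
    have hnta : MV.IsNontrivialSCC F (MV.scc F (γ tq)) := by
      obtain ⟨t2, -, h2⟩ := ha 0
      obtain ⟨t1, ht1, h1⟩ := ha (t2 - 1)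
      exact nontrivial_of_return hγ (show t1 < t2 by omega) h1 h2
    have hntb : MV.IsNontrivialSCC F (MV.scc F (γ tr)) := by
      obtain ⟨t1, -, h1⟩ := hb 0
      obtain ⟨t2, ht2, h2⟩ := hb (t1 + 1)
      exact nontrivial_of_return hγ (show t1 < t2 by omega) h1 h2
    have hMq : ∀ t ≤ tq, γ t ∈ MV.scc F (γ tq) := fun t ht => hRsub _ (htq t ht)
    have hMr : ∀ t, tr ≤ t → γ t ∈ MV.scc F (γ tr) := fun t ht => hSsub _ (htr t ht)
    by_cases hqr : MV.scc F (γ tq) = MV.scc F (γ tr)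
    · left
      refine ⟨MV.scc F (γ tq), hnta, fun t => ?_⟩
      exact sol_mem_scc hγ (min_le_left t tq) (le_max_left t tr)
        (hMq _ (min_le_right t tq)) (by rw [hqr]; exact hMr _ (le_max_right t tr))
    · right
      exact ⟨MV.scc F (γ tq), MV.scc F (γ tr), hnta, hntb,
        ⟨hqr, γ (min tq tr), hMq _ (min_le_left tq tr), γ tr, hMr tr le_rfl,
          sol_reach hγ (min_le_right tq tr)⟩,
        min tq tr, tr, fun t ht => hMq t (le_trans ht (min_le_left tq tr)), hMr⟩
end

section
/- Assume S ⊆ N ⊆ X, S is an invariant set, and N is closed. Then Inv⁻(N,S) is a closed subset of X, and Inv⁺(N,S) is open in the subspace topology of N. -/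
open Set

/-- In a finite space, every point of the closure of a set is in the closure of a
singleton from the set. -/
lemma mem_closure_finite' {X : Type*} [TopologicalSpace X] [Finite X] {s : Set X} {z : X}
    (hz : z ∈ closure s) : ∃ y ∈ s, z ∈ closure {y} := by
  have hC : IsClosed (⋃ y ∈ s, closure {y}) :=
    Set.Finite.isClosed_biUnion (Set.toFinite s) fun i _ => isClosed_closure
  have hsub : closure s ⊆ ⋃ y ∈ s, closure {y} :=
    hC.closure_subset_iff.mpr fun x hx => Set.mem_biUnion hx (subset_closure rfl)
  simpa using hsub hz

/-- A closed set absorbs closures of singletons of its points. -/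
lemma closed_absorb {X : Type*} [TopologicalSpace X] {C : Set X} (hC : IsClosed C) {y z : X}
    (hy : y ∈ C) (hz : z ∈ closure {y}) : z ∈ C :=
  hC.closure_subset_iff.mpr (Set.singleton_subset_iff.2 hy) hz

/-- **Topological properties of `Inv⁻` and `Inv⁺`.** If `S ⊆ N`, `S` is invariant and
`N` is closed, then `Inv⁻(N,S)` is closed in `X` and `Inv⁺(N,S)` is open in the
subspace topology of `N`. -/
theorem invMinus_closed_invPlus_open {X : Type*} [TopologicalSpace X] [Finite X] [T0Space X]
    (F : X → Set X) (hF : MV.LscClosed F)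
    (S N : Set X) (hSN : S ⊆ N) (hS : MV.IsInvariant F S) (hN : IsClosed N) :
    IsClosed (MV.invMinus F N S) ∧
    IsOpen {y : N | (y : X) ∈ MV.invPlus F N S} := by
  constructor
  · -- Inv⁻ is closed
    apply isClosed_of_closure_subset
    intro z hz
    obtain ⟨y, hy, hzy⟩ := mem_closure_finite' hz
    obtain ⟨hyN, n, σ, hσ, h0, hn⟩ := hy
    have hzN : z ∈ N := closed_absorb hN hyN hzy
    rcases Nat.eq_zero_or_pos n with h | h
    · -- n = 0 : y ∈ S, use invariance to find a predecessor of y in S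
      subst h
      have hyS : y ∈ S := hn ▸ h0
      obtain ⟨γ, ⟨hγS, hγF⟩, i, hi⟩ := hS y hyS
      have hyFw : y ∈ F (γ (i - 1)) := by
        have := hγF (i - 1)
        rw [sub_add_cancel, hi] at this
        exact this
      have hzFw : z ∈ F (γ (i - 1)) := closed_absorb (hF.1 _) hyFw hzy
      refine ⟨hzN, 1, fun j => if j = 0 then γ (i - 1) else z, ⟨?_, ?_⟩, ?_, ?_⟩
      · intro j hj
        by_cases hj0 : j = 0 <;> simp [hj0, hzN, hSN (hγS (i - 1))]
      · intro j hj
        interval_cases j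
        simpa using hzFw
      · simpa using hγS (i - 1)
      · simp
    · -- n ≥ 1 : replace the last point of the path by z
      have hyFσ : y ∈ F (σ (n - 1)) := by
        have := hσ.2 (n - 1) (Nat.sub_lt h one_pos)
        have e : n - 1 + 1 = n := by omega
        rwa [e, hn] at this
      refine ⟨hzN, n, fun j => if j = n then z else σ j, ⟨?_, ?_⟩, ?_, ?_⟩
      · intro j hj
        by_cases hjn : j = n <;> simp [hjn, hzN, hσ.1 j hj]
      · intro j hj
        have hjne : j ≠ n := Nat.ne_of_lt hj
        by_cases hj1 : j + 1 = n
        · have hzF : z ∈ F (σ j) := by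
            have h1 : σ (j + 1) ∈ F (σ j) := hσ.2 j hj
            rw [hj1, hn] at h1
            exact closed_absorb (hF.1 _) h1 hzy
          simp [hjne, hj1, hzF]
        · simp [hjne, hj1, hσ.2 j hj]
      · have : (0 : ℕ) ≠ n := Nat.ne_of_lt h
        simpa [this] using h0
      · simp
  · -- Inv⁺ is open in N
    rw [← isClosed_compl_iff]
    apply isClosed_of_closure_subset
    intro z hz
    have hz' : (z : X) ∈ closure (Subtype.val '' {y : N | (y : X) ∈ MV.invPlus F N S}ᶜ) :=
      image_closure_subset_closure_image continuous_subtype_val (Set.mem_image_of_mem _ hz)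
    obtain ⟨y0, hy0, hzy⟩ := mem_closure_finite' hz'
    obtain ⟨y, hyc, rfl⟩ := hy0
    simp only [Set.mem_compl_iff, Set.mem_setOf_eq] at hyc ⊢
    intro hzP
    apply hyc
    obtain ⟨hzN, n, σ, hσ, h0, hnS⟩ := hzP
    have hFzy : F (z : X) ⊆ F (y : X) := hF.2 (y : X) (z : X) hzy
    rcases Nat.eq_zero_or_pos n with h | h
    · -- n = 0 : z ∈ S; use invariance to find a successor of z in S
      subst h
      have hzS : (z : X) ∈ S := h0 ▸ hnS
      obtain ⟨γ, ⟨hγS, hγF⟩, i, hi⟩ := hS (z : X) hzS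
      have hwF : γ (i + 1) ∈ F (y : X) := hFzy (by rw [← hi]; exact hγF i)
      refine ⟨y.2, 1, fun j => if j = 0 then (y : X) else γ (i + 1), ⟨?_, ?_⟩, ?_, ?_⟩
      · intro j hj
        by_cases hj0 : j = 0 <;> simp [hj0, y.2, hSN (hγS (i + 1))]
      · intro j hj
        interval_cases j
        simpa using hwF
      · simp
      · simpa using hγS (i + 1)
    · -- n ≥ 1 : replace the first point of the path by y
      refine ⟨y.2, n, fun j => if j = 0 then (y : X) else σ j, ⟨?_, ?_⟩, ?_, ?_⟩
      · intro j hj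
        by_cases hj0 : j = 0 <;> simp [hj0, y.2, hσ.1 j hj]
      · intro j hj
        by_cases hj0 : j = 0
        · subst hj0
          have h1 : σ 1 ∈ F (σ 0) := hσ.2 0 hj
          rw [h0] at h1
          simpa using hFzy h1
        · simp [hj0, hσ.2 j hj]
      · simp
      · have : n ≠ 0 := Nat.pos_iff_ne_zero.mp h
        simpa [this] using hnS
end

section
/- Assume S ⊆ N ⊆ X, S is an invariant set, and N is an isolating set for S. Then Inv⁻(N,S) ∩ Inv⁺(N,S) = S, and S is locally closed in X, i.e., S is the difference of two closed subsets of X. -/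
open Set

open MV in
lemma path_concat_aux {X : Type*} (F : X → Set X) (N : Set X) (n m : ℕ) (σ τ : ℕ → X)
    (hσ : IsPathIn F N n σ) (hτ : IsPathIn F N m τ) (hjoin : τ 0 = σ n) :
    ∃ ρ, IsPathIn F N (n + m) ρ ∧ ρ 0 = σ 0 ∧ ρ (n + m) = τ m ∧ ρ n = σ n := by
  refine ⟨fun j => if j ≤ n then σ j else τ (j - n), ⟨?_, ?_⟩, ?_, ?_, ?_⟩
  · intro j hj
    by_cases h : j ≤ n
    · simpa [h] using hσ.1 j h
    · simp only [h, if_false]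
      exact hτ.1 (j - n) (by omega)
  · intro j hj
    by_cases h1 : j + 1 ≤ n
    · simp only [show j ≤ n by omega, h1, if_true]
      exact hσ.2 j (by omega)
    · by_cases h2 : j ≤ n
      · have hjn : j = n := by omega
        subst hjn
        have := hτ.2 0 (by omega)
        rw [hjoin] at this
        simpa [show ¬(j + 1 ≤ j) from by omega, show j + 1 - j = 1 from by omega] using this
      · simp only [h1, h2, if_false, show j + 1 - n = j - n + 1 by omega]
        exact hτ.2 (j - n) (by omega)
  · simp
  · by_cases h : n + m ≤ n
    · have hm : m = 0 := by omega
      simp [h, hm, ← hjoin]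
    · simp [h]
  · simp

lemma closure_eq_biUnion_closure {X : Type*} [TopologicalSpace X] [Finite X] (S : Set X) :
    closure S = ⋃ s ∈ S, closure {s} := by
  apply subset_antisymm
  · apply closure_minimal
    · intro s hs
      exact Set.mem_biUnion hs (subset_closure rfl)
    · exact Set.Finite.isClosed_biUnion S.toFinite (fun s _ => isClosed_closure)
  · exact Set.iUnion₂_subset fun s hs => closure_mono (Set.singleton_subset_iff.2 hs)

/-- **Reconstruction of `S` and local closedness.** If `S ⊆ N`, `S` is invariant and `N`
is an isolating set for `S`, then `Inv⁻(N,S) ∩ Inv⁺(N,S) = S` and `S` is locally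
closed in `X`, i.e. a difference of two closed subsets of `X`. -/
theorem invMinus_inter_invPlus_and_locallyClosed {X : Type*}
    [TopologicalSpace X] [Finite X] [T0Space X]
    (F : X → Set X) (hF : MV.LscClosed F)
    (S N : Set X) (hSN : S ⊆ N) (hS : MV.IsInvariant F S)
    (hN : MV.IsIsolatingSet F S N) :
    MV.invMinus F N S ∩ MV.invPlus F N S = S ∧
    ∃ C D : Set X, IsClosed C ∧ IsClosed D ∧ S = C \ D := by

  obtain ⟨hNcl, hIS1, hIS2⟩ := hN
  -- Part 1
  have part1 : MV.invMinus F N S ∩ MV.invPlus F N S = S := by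
    apply subset_antisymm
    · rintro y ⟨⟨hyN, n, σ, hσ, h0S, hny⟩, -, m, τ, hτ, h0y, hmS⟩
      obtain ⟨ρ, hρ, hρ0, hρnm, hρn⟩ :=
        path_concat_aux F N n m σ τ hσ hτ (by rw [h0y, hny])
      have := hIS1 (n + m) ρ hρ (hρ0 ▸ h0S) (hρnm ▸ hmS) n (by omega)
      rwa [hρn, hny] at this
    · intro y hy
      refine ⟨⟨hSN hy, 0, fun _ => y, ⟨fun j hj => hSN hy, fun j hj => by omega⟩, hy, rfl⟩,
              ⟨hSN hy, 0, fun _ => y, ⟨fun j hj => hSN hy, fun j hj => by omega⟩, rfl, hy⟩⟩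
  refine ⟨part1, ?_⟩
  -- Part 2: key step
  have key : ∀ x ∈ closure S, x ∉ S → ∀ x' ∈ closure ({x} : Set X), x' ∉ S := by
    intro x hxcl hxS x' hx' hx'S
    rw [closure_eq_biUnion_closure] at hxcl
    obtain ⟨s, hs, hxs⟩ := Set.mem_iUnion₂.1 hxcl
    -- predecessor of s
    obtain ⟨γ, hγ, i, hi⟩ := hS s hs
    have hsu : s ∈ F (γ (i - 1)) := by
      have := hγ.2 (i - 1)
      rwa [show i - 1 + 1 = i by ring, hi] at this
    have hxFu : x ∈ F (γ (i - 1)) := by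
      have : closure ({s} : Set X) ⊆ F (γ (i - 1)) :=
        closure_minimal (Set.singleton_subset_iff.2 hsu) (hF.1 _)
      exact this hxs
    -- successor of x'
    obtain ⟨γ', hγ', i', hi'⟩ := hS x' hx'S
    have htFx' : γ' (i' + 1) ∈ F x' := by have := hγ'.2 i'; rwa [hi'] at this
    have htFx : γ' (i' + 1) ∈ F x := hF.2 x x' hx' htFx'
    by_cases hxN : x ∈ N
    · -- path u → x → t in N with endpoints in S
      set u := γ (i - 1) with hu
      set t := γ' (i' + 1) with ht
      have huS : u ∈ S := hγ.1 _
      have htS : t ∈ S := hγ'.1 _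
      set σ : ℕ → X := fun j => if j = 0 then u else if j = 1 then x else t with hσdef
      have hpath : MV.IsPathIn F N 2 σ := by
        constructor
        · intro j hj
          interval_cases j
          · simpa [hσdef] using hSN huS
          · simpa [hσdef] using hxN
          · simpa [hσdef] using hSN htS
        · intro j hj
          interval_cases j
          · simpa [hσdef] using hxFu
          · simpa [hσdef] using htFx
      have := hIS1 2 σ hpath (by simpa [hσdef] using huS) (by simpa [hσdef] using htS)
        1 (by omega)
      exact hxS (by simpa [hσdef] using this)
    · -- x ∈ F(S) \ N, so x' ∈ S ∩ cl(F(S) \ N), contradicting IS2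
      have hxFS : x ∈ MV.image F S \ N := by
        refine ⟨Set.mem_biUnion (hγ.1 (i - 1)) hxFu, hxN⟩
      have hx'cl : x' ∈ closure (MV.image F S \ N) := by
        have : closure ({x} : Set X) ⊆ closure (MV.image F S \ N) :=
          closure_minimal (Set.singleton_subset_iff.2 (subset_closure hxFS)) isClosed_closure
        exact this hx'
      have : x' ∈ S ∩ closure (MV.image F S \ N) := ⟨hx'S, hx'cl⟩
      rw [hIS2] at this
      exact this
  -- cl S \ S is closed
  set D := closure S \ S with hD
  have hDeq : D = ⋃ x ∈ D, closure ({x} : Set X) := by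
    apply subset_antisymm
    · intro x hx
      exact Set.mem_biUnion hx (subset_closure rfl)
    · rintro y hy
      obtain ⟨x, hx, hyx⟩ := Set.mem_iUnion₂.1 hy
      refine ⟨?_, key x hx.1 hx.2 y hyx⟩
      have : closure ({x} : Set X) ⊆ closure S :=
        closure_minimal (Set.singleton_subset_iff.2 hx.1) isClosed_closure
      exact this hyx
  have hDcl : IsClosed D := by
    rw [hDeq]
    exact Set.Finite.isClosed_biUnion D.toFinite (fun x _ => isClosed_closure)
  refine ⟨closure S, D, isClosed_closure, hDcl, ?_⟩
  ext x
  simp only [hD, Set.mem_diff]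
  constructor
  · intro hx
    exact ⟨subset_closure hx, fun h => h.2 hx⟩
  · rintro ⟨hx, hx2⟩
    by_contra h
    exact hx2 ⟨hx, h⟩
end

section
/- Assume that N ⊆ X is an isolating set for an isolated invariant set S. Then the standard index pair P^N = (Inv⁻(N,S), Inv⁻(N,S) \ Inv⁺(N,S)) is a saturated index pair for S in N; in particular S = P^N₁ \ P^N₂. -/
open Set

section AuxStd

variable {X : Type*}

private lemma aux_mem_closure_finite [TopologicalSpace X] [Finite X] {A : Set X} {x : X}
    (h : x ∈ closure A) : ∃ y ∈ A, x ∈ closure {y} := by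
  have hcl : IsClosed (⋃ y ∈ A, closure ({y} : Set X)) :=
    (A.toFinite).isClosed_biUnion fun y _ => isClosed_closure
  have : closure A ⊆ ⋃ y ∈ A, closure ({y} : Set X) := by
    apply closure_minimal _ hcl
    intro z hz
    exact mem_biUnion hz (subset_closure rfl)
  simpa using this h

private lemma aux_path_concat {F : X → Set X} {A : Set X} {n m : ℕ} {σ τ : ℕ → X}
    (hσ : MV.IsPathIn F A n σ) (hτ : MV.IsPathIn F A m τ) (h : σ n = τ 0) :
    ∃ ρ, MV.IsPathIn F A (n + m) ρ ∧ ρ 0 = σ 0 ∧ ρ (n + m) = τ m ∧ ∀ j ≤ n, ρ j = σ j := by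
  refine ⟨fun j => if j ≤ n then σ j else τ (j - n), ⟨?_, ?_⟩, by simp, ?_,
    fun j hj => by simp [hj]⟩
  · intro j hj
    by_cases hjn : j ≤ n
    · simpa [hjn] using hσ.1 j hjn
    · simp only [hjn, if_false]
      exact hτ.1 (j - n) (by omega)
  · intro j hj
    by_cases h1 : j + 1 ≤ n
    · have hjn : j ≤ n := by omega
      simpa [h1, hjn] using hσ.2 j (by omega)
    · by_cases hjn : j ≤ n
      · have hje : j = n := by omega
        have : τ 1 ∈ F (τ 0) := hτ.2 0 (by omega)
        simp only [h1, if_false, hjn, if_true, hje]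
        rw [h]
        simpa using this
      · simp only [h1, if_false, hjn, if_false]
        have := hτ.2 (j - n) (by omega)
        rwa [show j - n + 1 = j + 1 - n by omega] at this
  · by_cases hm : n + m ≤ n
    · have : m = 0 := by omega
      simp [hm, this, h]
    · simp [hm]

private lemma aux_path_const {F : X → Set X} {A : Set X} {x : X} (hx : x ∈ A) :
    MV.IsPathIn F A 0 (fun _ => x) :=
  ⟨fun _ _ => hx, fun _ hj => absurd hj (by omega)⟩

private lemma aux_path_snoc {F : X → Set X} {A : Set X} {n : ℕ} {σ : ℕ → X}
    (hσ : MV.IsPathIn F A n σ) {x : X} (hx : x ∈ A) (hfx : x ∈ F (σ n)) :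
    ∃ ρ, MV.IsPathIn F A (n + 1) ρ ∧ ρ 0 = σ 0 ∧ ρ (n + 1) = x ∧ ∀ j ≤ n, ρ j = σ j := by
  have hτ : MV.IsPathIn F A 1 (fun j => if j = 0 then σ n else x) := by
    constructor
    · intro j hj
      by_cases hj0 : j = 0
      · simpa [hj0] using hσ.1 n le_rfl
      · simpa [hj0] using hx
    · intro j hj
      have : j = 0 := by omega
      simpa [this] using hfx
  obtain ⟨ρ, h1, h2, h3, h4⟩ := aux_path_concat hσ hτ (by simp)
  exact ⟨ρ, h1, h2, by simpa using h3, h4⟩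

private lemma aux_path_cons {F : X → Set X} {A : Set X} {ℓ : ℕ} {ζ : ℕ → X}
    (hζ : MV.IsPathIn F A ℓ ζ) {y : X} (hy : y ∈ A) (hw : ζ 0 ∈ F y) :
    ∃ ρ, MV.IsPathIn F A (1 + ℓ) ρ ∧ ρ 0 = y ∧ ρ (1 + ℓ) = ζ ℓ := by
  have hτ : MV.IsPathIn F A 1 (fun j => if j = 0 then y else ζ 0) := by
    constructor
    · intro j hj
      by_cases hj0 : j = 0
      · simpa [hj0] using hy
      · simpa [hj0] using hζ.1 0 (by omega)
    · intro j hj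
      have : j = 0 := by omega
      simpa [this] using hw
  obtain ⟨ρ, h1, h2, h3, _⟩ := aux_path_concat hτ hζ (by simp)
  exact ⟨ρ, h1, by simpa using h2, h3⟩

end AuxStd

/-- **Existence of a saturated index pair.** If `N` is an isolating set for the isolated
invariant set `S`, then the standard pair `P^N = (Inv⁻(N,S), Inv⁻(N,S) \ Inv⁺(N,S))`
is an index pair for `S` in `N`, and it is saturated: `S = P^N₁ \ P^N₂`. -/
theorem standardIndexPair_saturated {X : Type*} [TopologicalSpace X] [Finite X] [T0Space X]
    (F : X → Set X) (hF : MV.LscClosed F)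
    (S N : Set X) (hS : MV.IsInvariant F S) (hN : MV.IsIsolatingSet F S N) :
    MV.IsIndexPair F S N (MV.invMinus F N S) (MV.invMinus F N S \ MV.invPlus F N S) ∧
    S = MV.invMinus F N S \ (MV.invMinus F N S \ MV.invPlus F N S) := by
  obtain ⟨hFcl, hFlsc⟩ := hF
  obtain ⟨hNcl, hIS1, hIS2⟩ := hN
  set P₁ := MV.invMinus F N S with hP₁def
  set Ip := MV.invPlus F N S with hIpdef
  have hSpre : ∀ x ∈ S, ∃ z ∈ S, x ∈ F z := by
    intro x hx
    obtain ⟨γ, ⟨hγS, hγF⟩, i, hi⟩ := hS x hx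
    refine ⟨γ (i - 1), hγS (i - 1), ?_⟩
    have := hγF (i - 1)
    rwa [show i - 1 + 1 = i by ring, hi] at this
  have hSpost : ∀ x ∈ S, ∃ w ∈ S, w ∈ F x := by
    intro x hx
    obtain ⟨γ, ⟨hγS, hγF⟩, i, hi⟩ := hS x hx
    exact ⟨γ (i + 1), hγS (i + 1), by rw [← hi]; exact hγF i⟩
  have hSN : S ⊆ N := by
    intro x hx
    by_contra hxN
    obtain ⟨z, hzS, hxF⟩ := hSpre x hx
    have : x ∈ S ∩ closure (MV.image F S \ N) :=
      ⟨hx, subset_closure ⟨mem_biUnion hzS hxF, hxN⟩⟩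
    rw [hIS2] at this
    exact this
  have hSP1 : S ⊆ P₁ := fun x hx =>
    ⟨hSN hx, 0, fun _ => x, aux_path_const (hSN hx), hx, rfl⟩
  have hSIp : S ⊆ Ip := fun x hx =>
    ⟨hSN hx, 0, fun _ => x, aux_path_const (hSN hx), rfl, hx⟩
  have hcap : P₁ ∩ Ip = S := by
    apply Subset.antisymm
    · rintro x ⟨⟨_, n, σ, hσ, hσ0, hσn⟩, ⟨_, m, τ, hτ, hτ0, hτm⟩⟩
      obtain ⟨ρ, hρ, hρ0, hρe, hρpre⟩ := aux_path_concat hσ hτ (hσn.trans hτ0.symm)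
      have hall := hIS1 (n + m) ρ hρ (hρ0 ▸ hσ0) (hρe ▸ hτm)
      have := hall n (by omega)
      rwa [hρpre n le_rfl, hσn] at this
    · exact subset_inter hSP1 hSIp
  have hIpstep : ∀ x ∈ Ip, ∃ w, w ∈ F x ∧
      ∃ ℓ ζ, MV.IsPathIn F N ℓ ζ ∧ ζ 0 = w ∧ ζ ℓ ∈ S := by
    rintro x ⟨hxN, m, τ, hτ, hτ0, hτm⟩
    rcases Nat.eq_zero_or_pos m with hm | hm
    · have hxS : x ∈ S := by rw [← hτ0]; rwa [hm] at hτm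
      obtain ⟨w, hwS, hwF⟩ := hSpost x hxS
      exact ⟨w, hwF, 0, fun _ => w, aux_path_const (hSN hwS), rfl, hwS⟩
    · refine ⟨τ 1, by rw [← hτ0]; exact hτ.2 0 hm, m - 1, fun j => τ (j + 1),
        ⟨?_, ?_⟩, rfl, ?_⟩
      · intro j hj; exact hτ.1 (j + 1) (by omega)
      · intro j hj
        have := hτ.2 (j + 1) (by omega)
        simpa using this
      · show τ (m - 1 + 1) ∈ S
        rw [show m - 1 + 1 = m by omega]; exact hτm
  have hIpmono : ∀ x ∈ Ip, ∀ y ∈ N, F x ⊆ F y → y ∈ Ip := by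
    intro x hx y hyN hxy
    obtain ⟨w, hwF, ℓ, ζ, hζ, hζ0, hζe⟩ := hIpstep x hx
    obtain ⟨ρ, hρ0', hρ0, hρe⟩ := aux_path_cons hζ hyN (by rw [hζ0]; exact hxy hwF)
    exact ⟨hyN, 1 + ℓ, ρ, hρ0', hρ0, by rw [hρe]; exact hζe⟩
  have hP1F : ∀ y ∈ P₁, ∃ ℓ ζ, MV.IsPathIn F N ℓ ζ ∧ ζ 0 ∈ S ∧ y ∈ F (ζ ℓ) := by
    rintro y ⟨hyN, n, σ, hσ, hσ0, hσn⟩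
    rcases Nat.eq_zero_or_pos n with hn | hn
    · have hyS : y ∈ S := by rw [← hσn]; rwa [hn]
      obtain ⟨z, hzS, hyF⟩ := hSpre y hyS
      exact ⟨0, fun _ => z, aux_path_const (hSN hzS), hzS, hyF⟩
    · refine ⟨n - 1, σ, ⟨fun j hj => hσ.1 j (by omega), fun j hj => hσ.2 j (by omega)⟩,
        hσ0, ?_⟩
      have := hσ.2 (n - 1) (by omega)
      rwa [show n - 1 + 1 = n by omega, hσn] at this
  have hP1closed : IsClosed P₁ := by
    apply isClosed_of_closure_subset
    intro x hx
    obtain ⟨y, hyP, hxcl⟩ := aux_mem_closure_finite hx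
    have hxN : x ∈ N := hNcl.closure_subset_iff.mpr (singleton_subset_iff.mpr hyP.1) hxcl
    obtain ⟨ℓ, ζ, hζ, hζ0, hyF⟩ := hP1F y hyP
    have hxF : x ∈ F (ζ ℓ) :=
      (hFcl (ζ ℓ)).closure_subset_iff.mpr (singleton_subset_iff.mpr hyF) hxcl
    obtain ⟨ρ, hρ, hρ0, hρe, _⟩ := aux_path_snoc hζ hxN hxF
    exact ⟨hxN, ℓ + 1, ρ, hρ, by rw [hρ0]; exact hζ0, hρe⟩
  have hP2closed : IsClosed (P₁ \ Ip) := by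
    apply isClosed_of_closure_subset
    intro x hx
    obtain ⟨y, ⟨hyP1, hyIp⟩, hxcl⟩ := aux_mem_closure_finite hx
    have hxP1 : x ∈ P₁ :=
      hP1closed.closure_subset_iff.mpr diff_subset hx
    refine ⟨hxP1, fun hxIp => hyIp ?_⟩
    exact hIpmono x hxIp y hyP1.1 (hFlsc y x hxcl)
  have hIP1a : MV.image F P₁ ∩ N ⊆ P₁ := by
    rintro v ⟨hv, hvN⟩
    simp only [MV.image, mem_iUnion, exists_prop] at hv
    obtain ⟨x, hxP1, hvF⟩ := hv
    obtain ⟨hxN, n, σ, hσ, hσ0, hσn⟩ := hxP1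
    obtain ⟨ρ, hρ, hρ0, hρe, _⟩ := aux_path_snoc hσ hvN (by rw [hσn]; exact hvF)
    exact ⟨hvN, n + 1, ρ, hρ, by rw [hρ0]; exact hσ0, hρe⟩
  have hIP1b : MV.image F (P₁ \ Ip) ∩ N ⊆ P₁ \ Ip := by
    rintro v ⟨hv, hvN⟩
    simp only [MV.image, mem_iUnion, exists_prop] at hv
    obtain ⟨x, ⟨hxP1, hxIp⟩, hvF⟩ := hv
    refine ⟨hIP1a ⟨mem_biUnion hxP1 hvF, hvN⟩, fun hvIp => hxIp ?_⟩
    obtain ⟨_, m, τ, hτ, hτ0, hτm⟩ := hvIp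
    obtain ⟨ρ, hρ, hρ0, hρe⟩ := aux_path_cons hτ hxP1.1 (by rw [hτ0]; exact hvF)
    exact ⟨hxP1.1, 1 + m, ρ, hρ, hρ0, by rw [hρe]; exact hτm⟩
  have hIP2 : P₁ ∩ closure (MV.image F P₁ \ N) ⊆ P₁ \ Ip := by
    rintro x ⟨hxP1, hxcl⟩
    refine ⟨hxP1, fun hxIp => ?_⟩
    have hxS : x ∈ S := by rw [← hcap]; exact ⟨hxP1, hxIp⟩
    obtain ⟨y, ⟨hyIm, hyN⟩, hxcly⟩ := aux_mem_closure_finite hxcl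
    simp only [MV.image, mem_iUnion, exists_prop] at hyIm
    obtain ⟨z, hzP1, hyF⟩ := hyIm
    obtain ⟨hzN, n, σ, hσ, hσ0, hσn⟩ := hzP1
    have hxF : x ∈ F z :=
      (hFcl z).closure_subset_iff.mpr (singleton_subset_iff.mpr hyF) hxcly
    obtain ⟨ρ, hρ, hρ0, hρe, hρpre⟩ := aux_path_snoc hσ (hSN hxS) (by rw [hσn]; exact hxF)
    obtain ⟨hxN', m, τ, hτ, hτ0, hτm⟩ := hxIp
    obtain ⟨π, hπ, hπ0, hπe, hπpre⟩ := aux_path_concat hρ hτ (by rw [hρe, hτ0])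
    have hall := hIS1 (n + 1 + m) π hπ (by rw [hπ0, hρ0]; exact hσ0)
      (by rw [hπe]; exact hτm)
    have hzS : z ∈ S := by
      have := hall n (by omega)
      rwa [hπpre n (by omega), hρpre n le_rfl, hσn] at this
    have : x ∈ S ∩ closure (MV.image F S \ N) := by
      refine ⟨hxS, closure_mono ?_ hxcly⟩
      rintro t ht
      rw [mem_singleton_iff] at ht
      subst ht
      exact ⟨mem_biUnion hzS hyF, hyN⟩
    rw [hIS2] at this
    exact this
  have hsat : P₁ \ (P₁ \ Ip) = S := by
    rw [show P₁ \ (P₁ \ Ip) = P₁ ∩ Ip from by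
      ext t; simp only [mem_diff, mem_inter_iff]; tauto, hcap]
  have hIP3 : S = MV.invPart F (P₁ \ (P₁ \ Ip)) := by
    rw [hsat]
    apply Subset.antisymm
    · intro x hx
      exact hS x hx
    · rintro x ⟨γ, hγ, i, hi⟩
      rw [← hi]
      exact hγ.1 i
  exact ⟨⟨hP1closed, hP2closed, diff_subset, fun x hx => hx.1, hIP1a, hIP1b, hIP2, hIP3⟩,
    hsat.symm⟩
end

section
/- If M ⊆ N are two isolating sets for the same isolated invariant set S, then the associated standard index pairs satisfy P^M_i ⊆ P^N_i for i = 1,2, where P^N₁ = Inv⁻(N,S) and P^N₂ = P^N₁ \ Inv⁺(N,S), and similarly for M. -/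
open Set

lemma MV.IsPathIn.mono {X : Type*} {F : X → Set X} {A B : Set X} {n : ℕ} {σ : ℕ → X}
    (h : MV.IsPathIn F A n σ) (hAB : A ⊆ B) : MV.IsPathIn F B n σ :=
  ⟨fun j hj => hAB (h.1 j hj), h.2⟩

lemma MV.path_concat {X : Type*} {F : X → Set X} {A : Set X} {n m : ℕ} {σ τ : ℕ → X}
    (hσ : MV.IsPathIn F A n σ) (hτ : MV.IsPathIn F A m τ) (h : σ n = τ 0) :
    ∃ ρ, MV.IsPathIn F A (n + m) ρ ∧ ρ 0 = σ 0 ∧ ρ n = σ n ∧ ρ (n + m) = τ m := by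
  refine ⟨fun j => if j < n then σ j else τ (j - n), ?_, ?_, ?_, ?_⟩
  · constructor
    · intro j hj
      by_cases hjn : j < n
      · simpa [hjn] using hσ.1 j hjn.le
      · simp only [hjn, if_false]
        exact hτ.1 _ (by omega)
    · intro j hj
      by_cases hjn : j < n
      · by_cases hjn1 : j + 1 < n
        · simpa [hjn, hjn1] using hσ.2 j hjn
        · have hj1 : j + 1 = n := by omega
          simp only [hjn, hjn1, if_true, if_false, hj1]
          have := hσ.2 j hjn
          simpa [hj1, ← h] using this
      · simp only [hjn, show ¬ (j + 1 < n) by omega, if_false]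
        have h1 : j + 1 - n = (j - n) + 1 := by omega
        rw [h1]
        exact hτ.2 _ (by omega)
  · by_cases h0 : 0 < n
    · simp [h0]
    · have : n = 0 := by omega
      simp [this, ← h]
  · simp [← h]
  · simp [show ¬ (n + m < n) by omega]

/-- **Inclusion property of standard index pairs.** If `M ⊆ N` are two isolating sets
for the same isolated invariant set `S`, then `P^M_i ⊆ P^N_i` for `i = 1, 2`. -/
theorem standardIndexPair_mono {X : Type*} [TopologicalSpace X] [Finite X] [T0Space X]
    (F : X → Set X) (hF : MV.LscClosed F)
    (S M N : Set X) (hS : MV.IsInvariant F S) (hMN : M ⊆ N)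
    (hM : MV.IsIsolatingSet F S M) (hN : MV.IsIsolatingSet F S N) :
    MV.invMinus F M S ⊆ MV.invMinus F N S ∧
    MV.invMinus F M S \ MV.invPlus F M S ⊆ MV.invMinus F N S \ MV.invPlus F N S := by
  have h1 : MV.invMinus F M S ⊆ MV.invMinus F N S := by
    rintro y ⟨hyM, n, σ, hσ, h0, hn⟩
    exact ⟨hMN hyM, n, σ, hσ.mono hMN, h0, hn⟩
  refine ⟨h1, ?_⟩
  rintro y ⟨hyM, hyP⟩
  refine ⟨h1 hyM, fun hyPN => hyP ?_⟩
  obtain ⟨hyM', n, σ, hσ, h0, hn⟩ := hyM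
  obtain ⟨hyN, m, τ, hτ, ht0, htm⟩ := hyPN
  obtain ⟨ρ, hρ, hρ0, hρn, hρe⟩ := MV.path_concat (hσ.mono hMN) hτ (by rw [hn, ht0])
  have hyS : y ∈ S := by
    have := hN.2.1 (n + m) ρ hρ (by rw [hρ0]; exact h0) (by rw [hρe]; exact htm) n (by omega)
    rwa [hρn, hn] at this
  exact ⟨hyM', 0, fun _ => y, ⟨fun j _ => hyM', fun j hj => absurd hj (by omega)⟩, rfl, hyS⟩
end

section
/- If P = (P₁,P₂) and Q = (Q₁,Q₂) are two index pairs for an isolated invariant set S in an isolating set N, then P ∩ Q = (P₁ ∩ Q₁, P₂ ∩ Q₂) is also an index pair for S in N. -/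
open Set

lemma MV.image_mono {X : Type*} (F : X → Set X) {A B : Set X} (h : A ⊆ B) :
    MV.image F A ⊆ MV.image F B := by
  intro y hy
  simp only [MV.image, mem_iUnion] at hy ⊢
  obtain ⟨x, hx, hyx⟩ := hy
  exact ⟨x, h hx, hyx⟩

lemma MV.mem_image {X : Type*} (F : X → Set X) {A : Set X} {x y : X}
    (hx : x ∈ A) (hy : y ∈ F x) : y ∈ MV.image F A := by
  simp only [MV.image, mem_iUnion]
  exact ⟨x, hx, hy⟩

lemma MV.invPart_subset {X : Type*} (F : X → Set X) (A : Set X) :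
    MV.invPart F A ⊆ A := by
  rintro x ⟨γ, ⟨hγA, _⟩, i, rfl⟩
  exact hγA i

/-- Forward invariance: once a full solution in `A ⊆ N` enters a set `P`
with `F(P) ∩ N ⊆ P`, it stays in `P`. -/
lemma MV.forward {X : Type*} (F : X → Set X) {A P N : Set X}
    (hA : A ⊆ N) (hFP : MV.image F P ∩ N ⊆ P) {γ : ℤ → X}
    (hγ : MV.IsFullSolution F A γ) {i : ℤ} (hi : γ i ∈ P) :
    ∀ j, i ≤ j → γ j ∈ P := by
  have key : ∀ k : ℕ, γ (i + k) ∈ P := by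
    intro k
    induction k with
    | zero => simpa using hi
    | succ k ih =>
      have h1 : γ (i + k + 1) ∈ F (γ (i + k)) := hγ.2 (i + k)
      have h2 : γ (i + k + 1) ∈ N := hA (hγ.1 (i + k + 1))
      have : γ (i + k + 1) ∈ P := hFP ⟨MV.mem_image F ih h1, h2⟩
      convert this using 2
      push_cast; ring
  intro j hj
  have : j = i + ((j - i).toNat : ℤ) := by omega
  rw [this]
  exact key _

/-- **Intersection preserves index pairs.** If `P` and `Q` are index pairs for the
isolated invariant set `S` in the isolating set `N`, then so is `P ∩ Q`. -/
theorem indexPair_inter {X : Type*} [TopologicalSpace X] [Finite X] [T0Space X]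
    (F : X → Set X) (hF : MV.LscClosed F)
    (S N P₁ P₂ Q₁ Q₂ : Set X) (hS : MV.IsInvariant F S)
    (hN : MV.IsIsolatingSet F S N)
    (hP : MV.IsIndexPair F S N P₁ P₂) (hQ : MV.IsIndexPair F S N Q₁ Q₂) :
    MV.IsIndexPair F S N (P₁ ∩ Q₁) (P₂ ∩ Q₂) := by
  obtain ⟨hP1c, hP2c, hP21, hP1N, hFP1, hFP2, hIP2P, hSP⟩ := hP
  obtain ⟨hQ1c, hQ2c, hQ21, hQ1N, hFQ1, hFQ2, hIP2Q, hSQ⟩ := hQ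
  have hSsubP : S ⊆ P₁ \ P₂ := hSP ▸ MV.invPart_subset F _
  have hSsubQ : S ⊆ Q₁ \ Q₂ := hSQ ▸ MV.invPart_subset F _
  refine ⟨hP1c.inter hQ1c, hP2c.inter hQ2c, inter_subset_inter hP21 hQ21,
    inter_subset_left.trans hP1N, ?_, ?_, ?_, ?_⟩
  · intro y ⟨hy, hyN⟩
    exact ⟨hFP1 ⟨MV.image_mono F inter_subset_left hy, hyN⟩,
      hFQ1 ⟨MV.image_mono F inter_subset_right hy, hyN⟩⟩
  · intro y ⟨hy, hyN⟩
    exact ⟨hFP2 ⟨MV.image_mono F inter_subset_left hy, hyN⟩,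
      hFQ2 ⟨MV.image_mono F inter_subset_right hy, hyN⟩⟩
  · intro y ⟨⟨hyP, hyQ⟩, hycl⟩
    have hclP : y ∈ closure (MV.image F P₁ \ N) :=
      closure_mono (diff_subset_diff_left (MV.image_mono F inter_subset_left)) hycl
    have hclQ : y ∈ closure (MV.image F Q₁ \ N) :=
      closure_mono (diff_subset_diff_left (MV.image_mono F inter_subset_right)) hycl
    exact ⟨hIP2P ⟨hyP, hclP⟩, hIP2Q ⟨hyQ, hclQ⟩⟩
  · apply Set.Subset.antisymm
    · intro x hx
      obtain ⟨γ, ⟨hγS, hγF⟩, i, rfl⟩ := hS x hx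
      exact ⟨γ, ⟨fun j => ⟨⟨(hSsubP (hγS j)).1, (hSsubQ (hγS j)).1⟩,
        fun h => (hSsubP (hγS j)).2 h.1⟩, hγF⟩, i, rfl⟩
    · rintro x ⟨γ, hγ, i₀, rfl⟩
      have hDN : (P₁ ∩ Q₁) \ (P₂ ∩ Q₂) ⊆ N := diff_subset.trans
        (inter_subset_left.trans hP1N)
      by_cases hP2 : ∃ i, γ i ∈ P₂
      · obtain ⟨i, hi⟩ := hP2
        by_cases hQ2 : ∃ i', γ i' ∈ Q₂
        · obtain ⟨i', hi'⟩ := hQ2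
          exfalso
          have h1 : γ (max i i') ∈ P₂ := MV.forward F hDN hFP2 hγ hi _ (le_max_left _ _)
          have h2 : γ (max i i') ∈ Q₂ := MV.forward F hDN hFQ2 hγ hi' _ (le_max_right _ _)
          exact (hγ.1 (max i i')).2 ⟨h1, h2⟩
        · push_neg at hQ2
          rw [hSQ]
          exact ⟨γ, ⟨fun j => ⟨(hγ.1 j).1.2, hQ2 j⟩, hγ.2⟩, i₀, rfl⟩
      · push_neg at hP2
        rw [hSP]
        exact ⟨γ, ⟨fun j => ⟨(hγ.1 j).1.1, hP2 j⟩, hγ.2⟩, i₀, rfl⟩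
end

section
/- If P = (P₁,P₂) and Q = (Q₁,Q₂) are index pairs for an isolated invariant set S in an isolating set N with P₁ ⊆ Q₁ and P₂ ⊆ Q₂, then the pair (P₁, P₁ ∩ Q₂) is also an index pair for S in N. -/
open Set

/-- **New index pairs from nested ones, I.** If `P ⊆ Q` are index pairs for `S` in `N`,
then `(P₁, P₁ ∩ Q₂)` is also an index pair for `S` in `N`. -/
theorem indexPair_nested_fst {X : Type*} [TopologicalSpace X] [Finite X] [T0Space X]
    (F : X → Set X) (hF : MV.LscClosed F)
    (S N P₁ P₂ Q₁ Q₂ : Set X) (hS : MV.IsInvariant F S)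
    (hN : MV.IsIsolatingSet F S N)
    (hP : MV.IsIndexPair F S N P₁ P₂) (hQ : MV.IsIndexPair F S N Q₁ Q₂)
    (h1 : P₁ ⊆ Q₁) (h2 : P₂ ⊆ Q₂) :
    MV.IsIndexPair F S N P₁ (P₁ ∩ Q₂) := by
  obtain ⟨hPc, hP2c, hP21, hP1N, hPip1, hPip1', hPip2, hPinv⟩ := hP
  obtain ⟨hQc, hQ2c, hQ21, hQ1N, hQip1, hQip1', hQip2, hQinv⟩ := hQ
  refine ⟨hPc, hPc.inter hQ2c, inter_subset_left, hP1N, hPip1, ?_, ?_, ?_⟩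
  · rintro y ⟨hy, hyN⟩
    simp only [MV.image, mem_iUnion, exists_prop] at hy
    obtain ⟨x, ⟨hx1, hx2⟩, hyF⟩ := hy
    have hy1 : y ∈ MV.image F P₁ := mem_biUnion hx1 hyF
    have hy2 : y ∈ MV.image F Q₂ := mem_biUnion hx2 hyF
    exact ⟨hPip1 ⟨hy1, hyN⟩, hQip1' ⟨hy2, hyN⟩⟩
  · intro x hx
    exact ⟨hx.1, h2 (hPip2 hx)⟩
  · have hdiff : P₁ \ (P₁ ∩ Q₂) = P₁ \ Q₂ := by ext y; simp
    rw [hdiff]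
    apply Subset.antisymm
    · intro x hxS
      obtain ⟨γ, ⟨hγmem, hγstep⟩, i, hi⟩ := hS x hxS
      have hSsub : S ⊆ P₁ \ Q₂ := by
        intro y hy
        have hy1 : y ∈ P₁ \ P₂ := by
          rw [hPinv] at hy; obtain ⟨γ', hγ', i', hi'⟩ := hy
          rw [← hi']; exact hγ'.1 i'
        have hy2 : y ∈ Q₁ \ Q₂ := by
          rw [hQinv] at hy; obtain ⟨γ', hγ', i', hi'⟩ := hy
          rw [← hi']; exact hγ'.1 i'
        exact ⟨hy1.1, hy2.2⟩
      exact ⟨γ, ⟨fun j => hSsub (hγmem j), hγstep⟩, i, hi⟩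
    · rintro x ⟨γ, ⟨hγmem, hγstep⟩, i, hi⟩
      rw [hQinv]
      exact ⟨γ, ⟨fun j => ⟨h1 (hγmem j).1, (hγmem j).2⟩, hγstep⟩, i, hi⟩
end

section
/- If P = (P₁,P₂) and Q = (Q₁,Q₂) are index pairs for an isolated invariant set S in an isolating set N with P₁ ⊆ Q₁ and P₂ ⊆ Q₂, then the pair (P₁ ∪ Q₂, Q₂) is also an index pair for S in N. -/
open Set

/-- **New index pairs from nested ones, II.** If `P ⊆ Q` are index pairs for `S` in `N`,
then `(P₁ ∪ Q₂, Q₂)` is also an index pair for `S` in `N`. -/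
theorem indexPair_nested_snd {X : Type*} [TopologicalSpace X] [Finite X] [T0Space X]
    (F : X → Set X) (hF : MV.LscClosed F)
    (S N P₁ P₂ Q₁ Q₂ : Set X) (hS : MV.IsInvariant F S)
    (hN : MV.IsIsolatingSet F S N)
    (hP : MV.IsIndexPair F S N P₁ P₂) (hQ : MV.IsIndexPair F S N Q₁ Q₂)
    (h1 : P₁ ⊆ Q₁) (h2 : P₂ ⊆ Q₂) :
    MV.IsIndexPair F S N (P₁ ∪ Q₂) Q₂ := by
  obtain ⟨hP1c, hP2c, hP21, hP1N, hFP1, hFP2, hIP2P, hSP⟩ := hP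
  obtain ⟨hQ1c, hQ2c, hQ21, hQ1N, hFQ1, hFQ2, hIP2Q, hSQ⟩ := hQ
  have himg : ∀ A B : Set X, MV.image F (A ∪ B) = MV.image F A ∪ MV.image F B := by
    intro A B
    simp only [MV.image]
    rw [Set.biUnion_union]
  have himono : ∀ A B : Set X, A ⊆ B → MV.image F A ⊆ MV.image F B := by
    intro A B hAB y hy
    simp only [MV.image, Set.mem_iUnion] at hy ⊢
    obtain ⟨x, hx, hyx⟩ := hy
    exact ⟨x, hAB hx, hyx⟩
  refine ⟨hP1c.union hQ2c, hQ2c, Set.subset_union_right, ?_, ?_, hFQ2, ?_, ?_⟩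
  · exact Set.union_subset hP1N (hQ21.trans hQ1N)
  · -- IP1 for P₁ ∪ Q₂
    rw [himg]
    rintro y ⟨(hy | hy), hyN⟩
    · exact Or.inl (hFP1 ⟨hy, hyN⟩)
    · exact Or.inr (hFQ2 ⟨hy, hyN⟩)
  · -- IP2
    rw [himg, Set.union_diff_distrib, closure_union]
    rintro x ⟨hx1, (hx2 | hx2)⟩
    · rcases hx1 with hx1 | hx1
      · exact h2 (hIP2P ⟨hx1, hx2⟩)
      · exact hx1
    · have hx1' : x ∈ Q₁ := by
        rcases hx1 with hx1 | hx1
        · exact h1 hx1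
        · exact hQ21 hx1
      exact hIP2Q ⟨hx1', closure_mono (Set.diff_subset_diff_left (himono _ _ hQ21)) hx2⟩
  · -- IP3
    have hset : (P₁ ∪ Q₂) \ Q₂ = P₁ \ Q₂ := by
      ext x
      simp only [Set.mem_diff, Set.mem_union]
      tauto
    rw [hset]
    apply Set.Subset.antisymm
    · -- S ⊆ invPart F (P₁ \ Q₂)
      intro x hx
      obtain ⟨γ, ⟨hγS, hγF⟩, i, hi⟩ := hS x hx
      have hSsub : S ⊆ P₁ \ Q₂ := by
        intro y hy
        have h1' : y ∈ P₁ \ P₂ := by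
          rw [hSP] at hy
          obtain ⟨δ, ⟨hδA, _⟩, j, hj⟩ := hy
          exact hj ▸ hδA j
        have h2' : y ∈ Q₁ \ Q₂ := by
          rw [hSQ] at hy
          obtain ⟨δ, ⟨hδA, _⟩, j, hj⟩ := hy
          exact hj ▸ hδA j
        exact ⟨h1'.1, h2'.2⟩
      exact ⟨γ, ⟨fun i => hSsub (hγS i), hγF⟩, i, hi⟩
    · -- invPart F (P₁ \ Q₂) ⊆ S
      intro x hx
      obtain ⟨γ, ⟨hγA, hγF⟩, i, hi⟩ := hx
      rw [hSP]
      exact ⟨γ, ⟨fun j => ⟨(hγA j).1, fun h => (hγA j).2 (h2 h)⟩, hγF⟩, i, hi⟩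
end

section
/- Let P ⊆ Q be two index pairs for an isolated invariant set S in an isolating set N, and let G = G(P,Q) be defined by G_i = P_i ∪ (F(Q_i) ∩ N) for i = 1,2. If P₁ = Q₁ or P₂ = Q₂, then G is an index pair for S in N. -/
open Set

/-- **Property (iii) of the pair `G(P,Q)`.** If `P ⊆ Q` are index pairs for `S` in `N`
and `P₁ = Q₁` or `P₂ = Q₂`, then `G = (P₁ ∪ (F(Q₁) ∩ N), P₂ ∪ (F(Q₂) ∩ N))` is an
index pair for `S` in `N`. -/
theorem G_pair_indexPair {X : Type*} [TopologicalSpace X] [Finite X] [T0Space X]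
    (F : X → Set X) (hF : MV.LscClosed F)
    (S N P₁ P₂ Q₁ Q₂ : Set X) (hS : MV.IsInvariant F S)
    (hN : MV.IsIsolatingSet F S N)
    (hP : MV.IsIndexPair F S N P₁ P₂) (hQ : MV.IsIndexPair F S N Q₁ Q₂)
    (h1 : P₁ ⊆ Q₁) (h2 : P₂ ⊆ Q₂) (h : P₁ = Q₁ ∨ P₂ = Q₂) :
    MV.IsIndexPair F S N (P₁ ∪ (MV.image F Q₁ ∩ N)) (P₂ ∪ (MV.image F Q₂ ∩ N)) := by
  obtain ⟨hFc, -⟩ := hF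
  obtain ⟨hP1c, hP2c, hP21, hP1N, hPip1, hPip2, hPip2', hPinv⟩ := hP
  obtain ⟨hQ1c, hQ2c, hQ21, hQ1N, hQip1, hQip2, hQip2', hQinv⟩ := hQ
  have hNc : IsClosed N := hN.1
  have himcl : ∀ A : Set X, IsClosed (MV.image F A) := fun A =>
    Set.Finite.isClosed_biUnion A.toFinite (fun x _ => hFc x)
  have hmem : ∀ (A : Set X) (x y : X), x ∈ A → y ∈ F x → y ∈ MV.image F A := by
    intro A x y hx hy
    exact Set.mem_biUnion hx hy
  have himono : ∀ A B : Set X, A ⊆ B → MV.image F A ⊆ MV.image F B := by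
    intro A B hAB y hy
    obtain ⟨x, hx, hyx⟩ := Set.mem_iUnion₂.1 hy
    exact hmem B x y (hAB hx) hyx
  set G₁ := P₁ ∪ (MV.image F Q₁ ∩ N) with hG₁
  set G₂ := P₂ ∪ (MV.image F Q₂ ∩ N) with hG₂
  have hG₁Q₁ : G₁ ⊆ Q₁ := union_subset h1 hQip1
  have hG₁N : G₁ ⊆ N := union_subset hP1N inter_subset_right
  -- points of S lie in Q₁ \ Q₂
  have hSQ : S ⊆ Q₁ \ Q₂ := by
    intro x hx
    rw [hQinv] at hx
    obtain ⟨γ, ⟨hγmem, -⟩, i, rfl⟩ := hx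
    exact hγmem i
  refine ⟨hP1c.union ((himcl Q₁).inter hNc), hP2c.union ((himcl Q₂).inter hNc),
    union_subset_union hP21 (inter_subset_inter_left N (himono _ _ hQ21)),
    hG₁N, ?_, ?_, ?_, ?_⟩
  · -- IP1 for G₁
    rintro y ⟨hy, hyN⟩
    obtain ⟨x, hx, hyx⟩ := Set.mem_iUnion₂.1 hy
    rcases hx with hx | ⟨hx, hxN⟩
    · exact Or.inl (hPip1 ⟨hmem P₁ x y hx hyx, hyN⟩)
    · exact Or.inr ⟨hmem Q₁ x y (hQip1 ⟨hx, hxN⟩) hyx, hyN⟩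
  · -- IP1 for G₂
    rintro y ⟨hy, hyN⟩
    obtain ⟨x, hx, hyx⟩ := Set.mem_iUnion₂.1 hy
    rcases hx with hx | ⟨hx, hxN⟩
    · exact Or.inl (hPip2 ⟨hmem P₂ x y hx hyx, hyN⟩)
    · exact Or.inr ⟨hmem Q₂ x y (hQip2 ⟨hx, hxN⟩) hyx, hyN⟩
  · -- IP2
    rintro x ⟨hxG, hxcl⟩
    rcases h with h | h
    · -- P₁ = Q₁
      have hGP : G₁ ⊆ P₁ := by rw [h]; exact hG₁Q₁
      have : x ∈ closure (MV.image F P₁ \ N) :=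
        closure_mono (diff_subset_diff_left (himono _ _ hGP)) hxcl
      exact Or.inl (hPip2' ⟨hGP hxG, this⟩)
    · -- P₂ = Q₂
      have : x ∈ closure (MV.image F Q₁ \ N) :=
        closure_mono (diff_subset_diff_left (himono _ _ hG₁Q₁)) hxcl
      have : x ∈ Q₂ := hQip2' ⟨hG₁Q₁ hxG, this⟩
      rw [← h] at this
      exact Or.inl this
  · -- IP3
    apply Set.Subset.antisymm
    · intro x hx
      have hx' := hx
      rw [hPinv] at hx'
      obtain ⟨γ, ⟨hγmem, hγsol⟩, i, rfl⟩ := hx'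
      have hγS : ∀ j, γ j ∈ S := by
        intro j
        rw [hPinv]
        exact ⟨γ, ⟨hγmem, hγsol⟩, j, rfl⟩
      refine ⟨γ, ⟨?_, hγsol⟩, i, rfl⟩
      intro j
      have hj := hγmem j
      have hjQ := hSQ (hγS j)
      refine ⟨Or.inl hj.1, ?_⟩
      rintro (hjP | hjF)
      · exact hj.2 hjP
      · exact hjQ.2 (hQip2 hjF)
    · intro x hx
      obtain ⟨γ, ⟨hγmem, hγsol⟩, i, rfl⟩ := hx
      rw [hQinv]
      refine ⟨γ, ⟨?_, hγsol⟩, i, rfl⟩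
      intro j
      have hj := hγmem j
      refine ⟨hG₁Q₁ hj.1, ?_⟩
      intro hjQ2
      have : γ (j + 1) ∈ G₂ :=
        Or.inr ⟨hmem Q₂ (γ j) (γ (j + 1)) hjQ2 (hγsol j), hG₁N (hγmem (j + 1)).1⟩
      exact (hγmem (j + 1)).2 this
end

section
/- Let P ⊆ Q be two index pairs for an isolated invariant set S in an isolating set N, and let G = G(P,Q) be defined by G_i = P_i ∪ (F(Q_i) ∩ N) for i = 1,2. For i ∈ {1,2}: if P_{3-i} = Q_{3-i} and G_i = Q_i, then P_i = Q_i. -/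
open Set

/-- If every point of a set `A` in a finite space has a predecessor in `A`,
and `A` is nonempty, then some point of `A` lies on a full solution in `A`. -/
private lemma cycle_mem_invPart {X : Type*} [Finite X] (F : X → Set X) (A : Set X)
    (h : ∀ x ∈ A, ∃ y ∈ A, x ∈ F y) (hne : A.Nonempty) :
    ∃ y ∈ A, y ∈ MV.invPart F A := by
  classical
  obtain ⟨x, hx⟩ := hne
  have hA : ∀ a : A, ∃ y : A, (a : X) ∈ F y := by
    intro a
    obtain ⟨y, hyA, hyF⟩ := h a a.2
    exact ⟨⟨y, hyA⟩, hyF⟩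
  choose f hf using hA
  let g : ℕ → A := fun n => f^[n] ⟨x, hx⟩
  have hg : ∀ k, (g k : X) ∈ F (g (k + 1)) := by
    intro k
    have hgs : g (k + 1) = f (g k) := Function.iterate_succ_apply' f k _
    rw [hgs]; exact hf (g k)
  obtain ⟨a, b, hne', heq⟩ := Finite.exists_ne_map_eq_of_infinite g
  wlog hab : a < b generalizing a b
  · exact this b a hne'.symm heq.symm (by omega)
  set p : ℕ := b - a with hp
  have hp0 : 0 < p := by omega
  have hpb : p ≤ b := by omega
  have hpz : (p : ℤ) ≠ 0 := by exact_mod_cast hp0.ne'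
  let r : ℤ → ℕ := fun j => (j % (p : ℤ)).toNat
  have hrZ : ∀ j, ((r j : ℤ)) = j % (p : ℤ) := by
    intro j
    exact Int.toNat_of_nonneg (Int.emod_nonneg _ hpz)
  have hrlt : ∀ j, r j < p := by
    intro j
    have h2 : j % (p : ℤ) < p := Int.emod_lt_of_pos _ (by exact_mod_cast hp0)
    have := hrZ j
    omega
  have hrsucc : ∀ j : ℤ, (r (j + 1) = r j + 1 ∧ r j + 1 < p) ∨
      (r (j + 1) = 0 ∧ r j + 1 = p) := by
    intro j
    have key : ((r (j + 1) : ℤ)) = ((r j : ℤ) + 1) % (p : ℤ) := by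
      rw [hrZ (j + 1), hrZ j]
      exact (Int.emod_add_emod j (p : ℤ) 1).symm
    have hlt := hrlt j
    by_cases hc : r j + 1 < p
    · left
      refine ⟨?_, hc⟩
      have : ((r j : ℤ) + 1) % (p : ℤ) = (r j : ℤ) + 1 :=
        Int.emod_eq_of_lt (by positivity) (by exact_mod_cast hc)
      rw [this] at key
      exact_mod_cast key
    · right
      have hpe : r j + 1 = p := by omega
      refine ⟨?_, hpe⟩
      have : ((r j : ℤ) + 1) = (p : ℤ) := by exact_mod_cast hpe
      rw [this, Int.emod_self] at key
      exact_mod_cast key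
  let γ : ℤ → X := fun j => (g (b - r j) : X)
  have hsol : MV.IsFullSolution F A γ := by
    constructor
    · intro i; exact (g (b - r i)).2
    · intro j
      rcases hrsucc j with ⟨hr1, hr2⟩ | ⟨hr1, hr2⟩
      · show (g (b - r (j + 1)) : X) ∈ F (g (b - r j))
        have hb : b - r j = (b - r (j + 1)) + 1 := by omega
        rw [hb]
        exact hg _
      · show (g (b - r (j + 1)) : X) ∈ F (g (b - r j))
        have hb : b - r j = a + 1 := by have := hrlt j; omega
        have hb0 : b - r (j + 1) = b := by omega
        rw [hb, hb0, ← heq]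
        exact hg a
  refine ⟨(g b : X), (g b).2, γ, hsol, 0, ?_⟩
  have hr0 : r 0 = 0 := by simp [r]
  show (g (b - r 0) : X) = (g b : X)
  rw [hr0, Nat.sub_zero]

/-- **Property (v) of the pair `G(P,Q)`.** If `P ⊆ Q` are index pairs for `S` in `N`
and, for `i ∈ {1,2}`, `P_{3-i} = Q_{3-i}` and `Gᵢ = Qᵢ`, then `Pᵢ = Qᵢ`. -/
theorem G_pair_eq {X : Type*} [TopologicalSpace X] [Finite X] [T0Space X]
    (F : X → Set X) (hF : MV.LscClosed F)
    (S N P₁ P₂ Q₁ Q₂ : Set X) (hS : MV.IsInvariant F S)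
    (hN : MV.IsIsolatingSet F S N)
    (hP : MV.IsIndexPair F S N P₁ P₂) (hQ : MV.IsIndexPair F S N Q₁ Q₂)
    (h1 : P₁ ⊆ Q₁) (h2 : P₂ ⊆ Q₂) :
    (P₂ = Q₂ → P₁ ∪ (MV.image F Q₁ ∩ N) = Q₁ → P₁ = Q₁) ∧
    (P₁ = Q₁ → P₂ ∪ (MV.image F Q₂ ∩ N) = Q₂ → P₂ = Q₂) := by
  obtain ⟨hP1c, hP2c, hP21, hP1N, hPF1, hPF2, hPexit, hPS⟩ := hP
  obtain ⟨hQ1c, hQ2c, hQ21, hQ1N, hQF1, hQF2, hQexit, hQS⟩ := hQ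
  constructor
  · -- i = 1
    intro hPQ2 hG
    by_contra hne
    have hA : (Q₁ \ P₁).Nonempty := by
      rw [Set.diff_nonempty]
      exact fun hsub => hne (subset_antisymm h1 hsub)
    have hpred : ∀ x ∈ Q₁ \ P₁, ∃ y ∈ Q₁ \ P₁, x ∈ F y := by
      rintro x ⟨hxQ, hxP⟩
      have hx' : x ∈ P₁ ∪ (MV.image F Q₁ ∩ N) := by rw [hG]; exact hxQ
      rcases hx' with hx' | ⟨himg, hN'⟩
      · exact absurd hx' hxP
      obtain ⟨y, hyQ, hxy⟩ : ∃ y ∈ Q₁, x ∈ F y := by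
        simpa [MV.image] using himg
      refine ⟨y, ⟨hyQ, fun hyP => ?_⟩, hxy⟩
      exact hxP (hPF1 ⟨Set.mem_biUnion hyP hxy, hN'⟩)
    obtain ⟨y, hyA, hyInv⟩ := cycle_mem_invPart F (Q₁ \ P₁) hpred hA
    have hsub : Q₁ \ P₁ ⊆ Q₁ \ Q₂ := by
      rintro z ⟨hz1, hz2⟩
      exact ⟨hz1, fun hz => hz2 (hP21 (hPQ2 ▸ hz))⟩
    have hyS : y ∈ S := by
      rw [hQS]
      obtain ⟨γ, ⟨hγA, hγF⟩, i, hγi⟩ := hyInv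
      exact ⟨γ, ⟨fun i => hsub (hγA i), hγF⟩, i, hγi⟩
    have hyP1 : y ∈ P₁ := by
      rw [hPS] at hyS
      obtain ⟨γ, ⟨hγA, _⟩, i, hγi⟩ := hyS
      exact (hγi ▸ hγA i).1
    exact hyA.2 hyP1
  · -- i = 2
    intro hPQ1 hG
    by_contra hne
    have hA : (Q₂ \ P₂).Nonempty := by
      rw [Set.diff_nonempty]
      exact fun hsub => hne (subset_antisymm h2 hsub)
    have hpred : ∀ x ∈ Q₂ \ P₂, ∃ y ∈ Q₂ \ P₂, x ∈ F y := by
      rintro x ⟨hxQ, hxP⟩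
      have hx' : x ∈ P₂ ∪ (MV.image F Q₂ ∩ N) := by rw [hG]; exact hxQ
      rcases hx' with hx' | ⟨himg, hN'⟩
      · exact absurd hx' hxP
      obtain ⟨y, hyQ, hxy⟩ : ∃ y ∈ Q₂, x ∈ F y := by
        simpa [MV.image] using himg
      refine ⟨y, ⟨hyQ, fun hyP => ?_⟩, hxy⟩
      exact hxP (hPF2 ⟨Set.mem_biUnion hyP hxy, hN'⟩)
    obtain ⟨y, hyA, hyInv⟩ := cycle_mem_invPart F (Q₂ \ P₂) hpred hA
    have hsub : Q₂ \ P₂ ⊆ P₁ \ P₂ := by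
      rintro z ⟨hz1, hz2⟩
      exact ⟨hPQ1 ▸ hQ21 hz1, hz2⟩
    have hyS : y ∈ S := by
      rw [hPS]
      obtain ⟨γ, ⟨hγA, hγF⟩, i, hγi⟩ := hyInv
      exact ⟨γ, ⟨fun i => hsub (hγA i), hγF⟩, i, hγi⟩
    have hyQ2 : y ∉ Q₂ := by
      rw [hQS] at hyS
      obtain ⟨γ, ⟨hγA, _⟩, i, hγi⟩ := hyS
      exact (hγi ▸ hγA i).2
    exact hyQ2 hyA.1
end

section
/- Let P ⊆ Q be index pairs for an isolated invariant set S in an isolating set N such that P₁ = Q₁ or P₂ = Q₂. Then there exist n ∈ ℕ and a sequence of index pairs for S in N, P = Qⁿ ⊆ Qⁿ⁻¹ ⊆ ⋯ ⊆ Q¹ ⊆ Q⁰ = Q, such that (a) for i ∈ {1,2}, if P_i = Q_i then Qᵏ_i = P_i = Q_i for all k = 1,…,n−1, and (b) F(Qᵏ_i) ∩ N ⊆ Qᵏ⁺¹_i for all k = 0,…,n−1 and i = 1,2. -/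
open Set

/-!
With `g A = F(A) ∩ N`, the sets `gᵏ(Qᵢ)` decrease and, `X` being finite, stabilise at some `Tᵢ`
with `Tᵢ ⊆ g(Tᵢ)`; the pairs `Rᵏᵢ = Pᵢ ∪ gᵏ(Qᵢ)` interpolate as soon as `Tᵢ ⊆ Pᵢ`. If not, every
point of `Tᵢ \ Pᵢ` has a predecessor in `Tᵢ \ Pᵢ` (as `Pᵢ` is forward invariant in `N`), so by
finiteness `Tᵢ \ Pᵢ` carries a periodic, hence full, solution. Since the other components of `P`
and `Q` agree, that solution runs in `Q₁ \ Q₂` or in `P₁ \ P₂`, so it lies in `S`, which is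
impossible.
-/

theorem Function.exists_mem_periodicPts {α : Type*} [Finite α] [Nonempty α] (f : α → α) :
    ∃ x, x ∈ Function.periodicPts f := by
  obtain ⟨x⟩ := ‹Nonempty α›
  obtain ⟨m, n, hmn, heq⟩ := Finite.exists_ne_map_eq_of_infinite fun k => f^[k] x
  wlog hlt : m < n generalizing m n
  · exact this n m hmn.symm heq.symm (by omega)
  refine ⟨f^[m] x, Function.mk_mem_periodicPts (Nat.sub_pos_of_lt hlt) ?_⟩
  change f^[n - m] (f^[m] x) = f^[m] x
  rw [← Function.iterate_add_apply, Nat.sub_add_cancel hlt.le]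
  exact heq.symm

theorem Monotone.exists_iterate_fixed_of_map_le {α : Type*} [PartialOrder α] [WellFoundedLT α]
    {f : α → α} (hf : Monotone f) {x y : α} (hx : f x ≤ x) (hy : f y ≤ y) :
    ∃ n, f (f^[n] x) = f^[n] x ∧ f (f^[n] y) = f^[n] y := by
  have hxy : Prod.map f f (x, y) ≤ (x, y) := ⟨hx, hy⟩
  obtain ⟨n, hn⟩ :=
    WellFoundedLT.antitone_chain_condition ((hf.prodMap hf).antitone_iterate_of_map_le hxy)
  have hstable := hn (n + 1) n.le_succ
  simp only [Prod.map_iterate, Prod.map_apply, Prod.mk.injEq,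
    Function.iterate_succ_apply'] at hstable
  exact ⟨n, hstable.1.symm, hstable.2.symm⟩

namespace MV

open Set

variable {X : Type*} {F : X → Set X}

theorem mem_image_s16 {A : Set X} {y : X} : y ∈ image F A ↔ ∃ x ∈ A, y ∈ F x := by
  simp [image]

theorem image_mono_s16 {A B : Set X} (h : A ⊆ B) : image F A ⊆ image F B :=
  biUnion_subset_biUnion_left h

theorem image_union (A B : Set X) : image F (A ∪ B) = image F A ∪ image F B :=
  biUnion_union A B F

theorem isClosed_image [TopologicalSpace X] [Finite X] (hF : ∀ x, IsClosed (F x)) (A : Set X) :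
    IsClosed (image F A) :=
  A.toFinite.isClosed_biUnion fun x _ => hF x

theorem invPart_mono {A B : Set X} (h : A ⊆ B) : invPart F A ⊆ invPart F B := by
  rintro x ⟨γ, ⟨hγA, hγF⟩, i, hi⟩
  exact ⟨γ, ⟨fun j => h (hγA j), hγF⟩, i, hi⟩

theorem invPart_subset_s16 (A : Set X) : invPart F A ⊆ A := by
  rintro x ⟨γ, ⟨hγA, -⟩, i, rfl⟩
  exact hγA i

theorem invPart_nonempty_of_subset_image [Finite X] {U : Set X} (hU : U ⊆ image F U)
    (hne : U.Nonempty) : (invPart F U).Nonempty := by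
  have hpred : ∀ y : U, ∃ x : U, (y : X) ∈ F x := fun y => by
    obtain ⟨x, hx, hyx⟩ := mem_image_s16.1 (hU y.2)
    exact ⟨⟨x, hx⟩, hyx⟩
  choose pred hpred using hpred
  have : Nonempty U := hne.to_subtype
  obtain ⟨z, hz⟩ := Function.exists_mem_periodicPts pred
  -- `pred` permutes its periodic points; running it backwards along `ℤ` gives a full solution
  let e := (Function.bijOn_periodicPts pred).equiv pred
  let γ : ℤ → X := fun m => ((e ^ (-m)) ⟨z, hz⟩ : U)
  refine ⟨γ 0, γ, ⟨fun m => Subtype.prop _, fun m => ?_⟩, 0, rfl⟩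
  have hstep : (e ^ (-m)) ⟨z, hz⟩ = e ((e ^ (-(m + 1))) ⟨z, hz⟩) := by
    rw [← Equiv.Perm.mul_apply, ← zpow_one_add]
    ring_nf
  simp only [γ, hstep]
  exact hpred _

def imageIn (F : X → Set X) (N A : Set X) : Set X := image F A ∩ N

variable {N : Set X}

theorem imageIn_mono : Monotone (imageIn F N) := fun _ _ h =>
  inter_subset_inter_left N (image_mono_s16 h)

theorem imageIn_union (A B : Set X) : imageIn F N (A ∪ B) = imageIn F N A ∪ imageIn F N B := by
  simp only [imageIn, image_union, union_inter_distrib_right]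

theorem isClosed_imageIn [TopologicalSpace X] [Finite X] (hF : ∀ x, IsClosed (F x))
    (hN : IsClosed N) (A : Set X) : IsClosed (imageIn F N A) :=
  (isClosed_image hF A).inter hN

theorem diff_subset_image_diff {A T : Set X} (hA : imageIn F N A ⊆ A)
    (hT : T ⊆ imageIn F N T) : T \ A ⊆ image F (T \ A) := by
  rintro y ⟨hyT, hyA⟩
  obtain ⟨hy, hyN⟩ := hT hyT
  obtain ⟨x, hxT, hyx⟩ := mem_image_s16.1 hy
  exact mem_image_s16.2 ⟨x, ⟨hxT, fun hxA => hyA (hA ⟨mem_image_s16.2 ⟨x, hxA, hyx⟩, hyN⟩)⟩, hyx⟩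

theorem subset_of_invPart_diff_eq_empty [Finite X] {A T : Set X} (hA : imageIn F N A ⊆ A)
    (hT : T ⊆ imageIn F N T) (hinv : invPart F (T \ A) = ∅) : T ⊆ A := by
  by_contra hTA
  exact (invPart_nonempty_of_subset_image (diff_subset_image_diff hA hT)
    (sdiff_nonempty.2 hTA)).ne_empty hinv

def interpolant (F : X → Set X) (N P Q : Set X) (k : ℕ) : Set X := P ∪ (imageIn F N)^[k] Q

variable {P Q : Set X}

theorem iterate_imageIn_subset (hQ : imageIn F N Q ⊆ Q) (k : ℕ) : (imageIn F N)^[k] Q ⊆ Q :=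
  imageIn_mono.antitone_iterate_of_map_le hQ k.zero_le

theorem interpolant_zero (hPQ : P ⊆ Q) : interpolant F N P Q 0 = Q :=
  union_eq_right.2 hPQ

theorem interpolant_eq_left {k : ℕ} (h : (imageIn F N)^[k] Q ⊆ P) : interpolant F N P Q k = P :=
  union_eq_left.2 h

theorem interpolant_eq_left_of_eq (hQ : imageIn F N Q ⊆ Q) (e : P = Q) (k : ℕ) :
    interpolant F N P Q k = P :=
  interpolant_eq_left (e ▸ iterate_imageIn_subset hQ k)

theorem interpolant_subset (hPQ : P ⊆ Q) (hQ : imageIn F N Q ⊆ Q) (k : ℕ) :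
    interpolant F N P Q k ⊆ Q :=
  union_subset hPQ (iterate_imageIn_subset hQ k)

theorem interpolant_succ_subset (hQ : imageIn F N Q ⊆ Q) (k : ℕ) :
    interpolant F N P Q (k + 1) ⊆ interpolant F N P Q k :=
  union_subset_union_right P (imageIn_mono.antitone_iterate_of_map_le hQ k.le_succ)

theorem imageIn_interpolant_subset (hP : imageIn F N P ⊆ P) (k : ℕ) :
    imageIn F N (interpolant F N P Q k) ⊆ interpolant F N P Q (k + 1) := by
  rw [interpolant, imageIn_union, interpolant, Function.iterate_succ_apply']
  exact union_subset_union_left _ hP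

theorem isClosed_interpolant [TopologicalSpace X] [Finite X] (hF : ∀ x, IsClosed (F x))
    (hN : IsClosed N) (hP : IsClosed P) (hQ : IsClosed Q) (k : ℕ) :
    IsClosed (interpolant F N P Q k) := by
  refine hP.union ?_
  induction k with
  | zero => exact hQ
  | succ k _ => rw [Function.iterate_succ_apply']; exact isClosed_imageIn hF hN _

section IsIndexPair

variable [TopologicalSpace X] {S P₁ P₂ Q₁ Q₂ : Set X}

theorem IsIndexPair.imageIn_fst_subset (h : IsIndexPair F S N P₁ P₂) : imageIn F N P₁ ⊆ P₁ :=
  h.2.2.2.2.1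

theorem IsIndexPair.imageIn_snd_subset (h : IsIndexPair F S N P₁ P₂) : imageIn F N P₂ ⊆ P₂ :=
  h.2.2.2.2.2.1

theorem IsIndexPair.snd_subset_fst (h : IsIndexPair F S N P₁ P₂) : P₂ ⊆ P₁ :=
  h.2.2.1

theorem IsIndexPair.eq_invPart (h : IsIndexPair F S N P₁ P₂) : S = invPart F (P₁ \ P₂) :=
  h.2.2.2.2.2.2.2

theorem IsIndexPair.isClosed_fst (h : IsIndexPair F S N P₁ P₂) : IsClosed P₁ :=
  h.1

theorem IsIndexPair.isClosed_snd (h : IsIndexPair F S N P₁ P₂) : IsClosed P₂ :=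
  h.2.1

theorem IsIndexPair.subset_diff (h : IsIndexPair F S N P₁ P₂) : S ⊆ P₁ \ P₂ :=
  h.eq_invPart ▸ invPart_subset_s16 _

theorem IsIndexPair.subset_fst_of_snd_eq [Finite X] (hP : IsIndexPair F S N P₁ P₂)
    (hQ : IsIndexPair F S N Q₁ Q₂) (h₂ : P₂ = Q₂) {T : Set X} (hT : T ⊆ imageIn F N T)
    (hTQ : T ⊆ Q₁) : T ⊆ P₁ := by
  refine subset_of_invPart_diff_eq_empty hP.imageIn_fst_subset hT
    (eq_empty_of_forall_notMem fun x hx => ?_)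
  have hxS : x ∈ S := by
    rw [hQ.eq_invPart]
    refine invPart_mono (fun y hy => ?_) hx
    exact ⟨hTQ hy.1, fun hyQ => hy.2 (hP.snd_subset_fst (h₂ ▸ hyQ))⟩
  exact (invPart_subset_s16 _ hx).2 (hP.subset_diff hxS).1

theorem IsIndexPair.subset_snd_of_fst_eq [Finite X] (hP : IsIndexPair F S N P₁ P₂)
    (hQ : IsIndexPair F S N Q₁ Q₂) (h₁ : P₁ = Q₁) {T : Set X} (hT : T ⊆ imageIn F N T)
    (hTQ : T ⊆ Q₂) : T ⊆ P₂ := by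
  refine subset_of_invPart_diff_eq_empty hP.imageIn_snd_subset hT
    (eq_empty_of_forall_notMem fun x hx => ?_)
  have hxS : x ∈ S := by
    rw [hP.eq_invPart]
    refine invPart_mono (fun y hy => ?_) hx
    exact ⟨h₁ ▸ hQ.snd_subset_fst (hTQ hy.1), hy.2⟩
  exact (hQ.subset_diff hxS).2 (hTQ (invPart_subset_s16 _ hx).1)

theorem IsIndexPair.of_subset_of_subset (hP : IsIndexPair F S N P₁ P₂)
    (hQ : IsIndexPair F S N Q₁ Q₂) (h : P₁ = Q₁ ∨ P₂ = Q₂) {R₁ R₂ : Set X}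
    (hR₁ : IsClosed R₁) (hR₂ : IsClosed R₂) (hPR₁ : P₁ ⊆ R₁) (hRQ₁ : R₁ ⊆ Q₁)
    (hPR₂ : P₂ ⊆ R₂) (hRQ₂ : R₂ ⊆ Q₂) (hFR₁ : imageIn F N R₁ ⊆ R₁)
    (hFR₂ : imageIn F N R₂ ⊆ R₂) : IsIndexPair F S N R₁ R₂ := by
  obtain ⟨-, -, hP₂₁, -, -, -, hPexit, hPinv⟩ := hP
  obtain ⟨-, -, hQ₂₁, hQN, -, -, hQexit, hQinv⟩ := hQ
  rcases h with rfl | rfl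
  · obtain rfl : R₁ = P₁ := hRQ₁.antisymm hPR₁
    refine ⟨hR₁, hR₂, hRQ₂.trans hQ₂₁, hQN, hFR₁, hFR₂, hPexit.trans hPR₂,
      subset_antisymm ?_ ?_⟩
    · exact hQinv ▸ invPart_mono (sdiff_subset_sdiff_right hRQ₂)
    · exact hPinv ▸ invPart_mono (sdiff_subset_sdiff_right hPR₂)
  · obtain rfl : R₂ = P₂ := hRQ₂.antisymm hPR₂
    refine ⟨hR₁, hR₂, hP₂₁.trans hPR₁, hRQ₁.trans hQN, hFR₁, hFR₂, ?_, subset_antisymm ?_ ?_⟩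
    · exact (inter_subset_inter hRQ₁ (closure_mono (sdiff_subset_sdiff_left
        (image_mono_s16 hRQ₁)))).trans hQexit
    · exact hPinv ▸ invPart_mono (sdiff_subset_sdiff_left hPR₁)
    · exact hQinv ▸ invPart_mono (sdiff_subset_sdiff_left hRQ₁)

theorem isIndexPair_interpolant [Finite X] (hF : ∀ x, IsClosed (F x)) (hN : IsClosed N)
    (hP : IsIndexPair F S N P₁ P₂) (hQ : IsIndexPair F S N Q₁ Q₂) (h₁ : P₁ ⊆ Q₁) (h₂ : P₂ ⊆ Q₂)
    (h : P₁ = Q₁ ∨ P₂ = Q₂) (k : ℕ) :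
    IsIndexPair F S N (interpolant F N P₁ Q₁ k) (interpolant F N P₂ Q₂ k) :=
  hP.of_subset_of_subset hQ h
    (isClosed_interpolant hF hN hP.isClosed_fst hQ.isClosed_fst k)
    (isClosed_interpolant hF hN hP.isClosed_snd hQ.isClosed_snd k)
    subset_union_left (interpolant_subset h₁ hQ.imageIn_fst_subset k)
    subset_union_left (interpolant_subset h₂ hQ.imageIn_snd_subset k)
    ((imageIn_interpolant_subset hP.imageIn_fst_subset k).trans
      (interpolant_succ_subset hQ.imageIn_fst_subset k))
    ((imageIn_interpolant_subset hP.imageIn_snd_subset k).trans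
      (interpolant_succ_subset hQ.imageIn_snd_subset k))

end IsIndexPair

end MV

theorem interpolating_indexPairs_general {X : Type*} [TopologicalSpace X] [Finite X]
    (F : X → Set X) (hF : MV.LscClosed F)
    (S N P₁ P₂ Q₁ Q₂ : Set X)
    (hN : MV.IsIsolatingSet F S N)
    (hP : MV.IsIndexPair F S N P₁ P₂) (hQ : MV.IsIndexPair F S N Q₁ Q₂)
    (h1 : P₁ ⊆ Q₁) (h2 : P₂ ⊆ Q₂) (h : P₁ = Q₁ ∨ P₂ = Q₂) :
    ∃ (n : ℕ) (R₁ R₂ : ℕ → Set X),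
      R₁ n = P₁ ∧ R₂ n = P₂ ∧ R₁ 0 = Q₁ ∧ R₂ 0 = Q₂ ∧
      (∀ k ≤ n, MV.IsIndexPair F S N (R₁ k) (R₂ k)) ∧
      (∀ k < n, R₁ (k + 1) ⊆ R₁ k ∧ R₂ (k + 1) ⊆ R₂ k) ∧
      (P₁ = Q₁ → ∀ k, 1 ≤ k → k ≤ n - 1 → R₁ k = P₁ ∧ R₁ k = Q₁) ∧
      (P₂ = Q₂ → ∀ k, 1 ≤ k → k ≤ n - 1 → R₂ k = P₂ ∧ R₂ k = Q₂) ∧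
      (∀ k < n, MV.image F (R₁ k) ∩ N ⊆ R₁ (k + 1) ∧
        MV.image F (R₂ k) ∩ N ⊆ R₂ (k + 1)) := by
  open MV in
  obtain ⟨n, hn₁, hn₂⟩ := imageIn_mono.exists_iterate_fixed_of_map_le
    hQ.imageIn_fst_subset hQ.imageIn_snd_subset
  have hT₁ : (imageIn F N)^[n] Q₁ ⊆ P₁ := h.elim
    (fun e => e ▸ iterate_imageIn_subset hQ.imageIn_fst_subset n)
    fun e => hP.subset_fst_of_snd_eq hQ e hn₁.ge
      (iterate_imageIn_subset hQ.imageIn_fst_subset n)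
  have hT₂ : (imageIn F N)^[n] Q₂ ⊆ P₂ := h.elim
    (fun e => hP.subset_snd_of_fst_eq hQ e hn₂.ge
      (iterate_imageIn_subset hQ.imageIn_snd_subset n))
    fun e => e ▸ iterate_imageIn_subset hQ.imageIn_snd_subset n
  refine ⟨n, interpolant F N P₁ Q₁, interpolant F N P₂ Q₂, interpolant_eq_left hT₁,
    interpolant_eq_left hT₂, interpolant_zero h1, interpolant_zero h2,
    fun k _ => isIndexPair_interpolant hF.1 hN.1 hP hQ h1 h2 h k,
    fun k _ => ⟨interpolant_succ_subset hQ.imageIn_fst_subset k,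
      interpolant_succ_subset hQ.imageIn_snd_subset k⟩,
    fun e k _ _ => ?_, fun e k _ _ => ?_,
    fun k _ => ⟨imageIn_interpolant_subset hP.imageIn_fst_subset k,
      imageIn_interpolant_subset hP.imageIn_snd_subset k⟩⟩
  · have hk := interpolant_eq_left_of_eq hQ.imageIn_fst_subset e k
    exact ⟨hk, hk.trans e⟩
  · have hk := interpolant_eq_left_of_eq hQ.imageIn_snd_subset e k
    exact ⟨hk, hk.trans e⟩

/-- **Interpolating between nested index pairs.** If `P ⊆ Q` are index pairs for `S` in
`N` with `P₁ = Q₁` or `P₂ = Q₂`, then there is a decreasing sequence of index pairs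
`P = Qⁿ ⊆ ⋯ ⊆ Q⁰ = Q` such that (a) if `Pᵢ = Qᵢ` then `Qᵏᵢ = Pᵢ = Qᵢ` for
`k = 1, …, n-1`, and (b) `F(Qᵏᵢ) ∩ N ⊆ Qᵏ⁺¹ᵢ` for `k = 0, …, n-1` and `i = 1, 2`. -/
theorem interpolating_indexPairs {X : Type*} [TopologicalSpace X] [Finite X] [T0Space X]
    (F : X → Set X) (hF : MV.LscClosed F)
    (S N P₁ P₂ Q₁ Q₂ : Set X) (hS : MV.IsInvariant F S)
    (hN : MV.IsIsolatingSet F S N)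
    (hP : MV.IsIndexPair F S N P₁ P₂) (hQ : MV.IsIndexPair F S N Q₁ Q₂)
    (h1 : P₁ ⊆ Q₁) (h2 : P₂ ⊆ Q₂) (h : P₁ = Q₁ ∨ P₂ = Q₂) :
    ∃ (n : ℕ) (R₁ R₂ : ℕ → Set X),
      R₁ n = P₁ ∧ R₂ n = P₂ ∧ R₁ 0 = Q₁ ∧ R₂ 0 = Q₂ ∧
      (∀ k ≤ n, MV.IsIndexPair F S N (R₁ k) (R₂ k)) ∧
      (∀ k < n, R₁ (k + 1) ⊆ R₁ k ∧ R₂ (k + 1) ⊆ R₂ k) ∧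
      (P₁ = Q₁ → ∀ k, 1 ≤ k → k ≤ n - 1 → R₁ k = P₁ ∧ R₁ k = Q₁) ∧
      (P₂ = Q₂ → ∀ k, 1 ≤ k → k ≤ n - 1 → R₂ k = P₂ ∧ R₂ k = Q₂) ∧
      (∀ k < n, MV.image F (R₁ k) ∩ N ⊆ R₁ (k + 1) ∧
        MV.image F (R₂ k) ∩ N ⊆ R₂ (k + 1)) :=
  interpolating_indexPairs_general F hF S N P₁ P₂ Q₁ Q₂ hN hP hQ h1 h2 h
end

section
/- Let P = (P₁,P₂) be an index pair for an isolated invariant set S in an isolating set N, and define the extended pair P̄ by P̄_i = P_i ∪ cl(F(P₁) \ N) for i = 1,2. Then: (1) P_i ⊆ P̄_i for i = 1,2; (2) F(P_i) ⊆ P̄_i for i = 1,2; and (3) P̄₁ \ P̄₂ = P₁ \ P₂. -/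
open Set

/-- **Properties of the extended topological pair `P̄`** given by
`P̄ᵢ = Pᵢ ∪ cl (F(P₁) \ N)`: (1) `Pᵢ ⊆ P̄ᵢ`; (2) `F(Pᵢ) ⊆ P̄ᵢ`; (3) `P̄₁ \ P̄₂ = P₁ \ P₂`. -/
theorem extendedPair_properties {X : Type*} [TopologicalSpace X] [Finite X] [T0Space X]
    (F : X → Set X) (hF : MV.LscClosed F)
    (S N P₁ P₂ : Set X) (hS : MV.IsInvariant F S)
    (hN : MV.IsIsolatingSet F S N)
    (hP : MV.IsIndexPair F S N P₁ P₂) :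
    (P₁ ⊆ P₁ ∪ closure (MV.image F P₁ \ N) ∧
     P₂ ⊆ P₂ ∪ closure (MV.image F P₁ \ N)) ∧
    (MV.image F P₁ ⊆ P₁ ∪ closure (MV.image F P₁ \ N) ∧
     MV.image F P₂ ⊆ P₂ ∪ closure (MV.image F P₁ \ N)) ∧
    (P₁ ∪ closure (MV.image F P₁ \ N)) \ (P₂ ∪ closure (MV.image F P₁ \ N)) =
      P₁ \ P₂ := by

  obtain ⟨hP₁c, hP₂c, hP₂₁, hP₁N, hIP1a, hIP1b, hIP2, hIP3⟩ := hP
  refine ⟨⟨subset_union_left, subset_union_left⟩, ⟨?_, ?_⟩, ?_⟩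
  · intro y hy
    by_cases hyN : y ∈ N
    · exact Or.inl (hIP1a ⟨hy, hyN⟩)
    · exact Or.inr (subset_closure ⟨hy, hyN⟩)
  · intro y hy
    by_cases hyN : y ∈ N
    · exact Or.inl (hIP1b ⟨hy, hyN⟩)
    · refine Or.inr (subset_closure ⟨?_, hyN⟩)
      obtain ⟨x, hx, hyx⟩ := Set.mem_iUnion₂.mp hy
      exact Set.mem_iUnion₂.mpr ⟨x, hP₂₁ hx, hyx⟩
  · ext y
    constructor
    · rintro ⟨hy1, hy2⟩
      rcases hy1 with h | h
      · exact ⟨h, fun hp2 => hy2 (Or.inl hp2)⟩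
      · exact absurd (Or.inr h) hy2
    · rintro ⟨hy1, hy2⟩
      refine ⟨Or.inl hy1, ?_⟩
      rintro (h | h)
      · exact hy2 h
      · exact hy2 (hIP2 ⟨hy1, h⟩)
end

section
/- Let M ⊆ N be two isolating sets for the same isolated invariant set S, let P^M and P^N be the associated standard index pairs, and form the extended pairs with respect to the corresponding isolating sets: (P̄^M)_i = P^M_i ∪ cl(F(P^M₁) \ M) and (P̄^N)_i = P^N_i ∪ cl(F(P^N₁) \ N) for i = 1,2. Then (P̄^M)_i ⊆ (P̄^N)_i for i = 1,2. -/
open Set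

open Set MV

section Aux

variable {X : Type*}

lemma aux_snoc (F : X → Set X) (A : Set X) {n : ℕ} {σ : ℕ → X} {x : X}
    (h : MV.IsPathIn F A n σ) (hxA : x ∈ A) (hxF : x ∈ F (σ n)) :
    MV.IsPathIn F A (n + 1) (fun j => if j ≤ n then σ j else x) := by
  constructor
  · intro j hj
    by_cases hjn : j ≤ n
    · simpa [hjn] using h.1 j hjn
    · simpa [hjn] using hxA
  · intro j hj
    by_cases hjn : j + 1 ≤ n
    · have hj' : j ≤ n := by omega
      simpa [hjn, hj'] using h.2 j (by omega)
    · have hj' : j = n := by omega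
      subst hj'
      simpa [hjn] using hxF

lemma aux_concat (F : X → Set X) (A : Set X) {n m : ℕ} {σ τ : ℕ → X}
    (hσ : MV.IsPathIn F A n σ) (hτ : MV.IsPathIn F A m τ) (hst : τ 0 = σ n) :
    MV.IsPathIn F A (n + m) (fun j => if j ≤ n then σ j else τ (j - n)) := by
  constructor
  · intro j hj
    by_cases hjn : j ≤ n
    · simpa [hjn] using hσ.1 j hjn
    · simpa [hjn] using hτ.1 (j - n) (by omega)
  · intro j hj
    by_cases hjn : j + 1 ≤ n
    · have hj' : j ≤ n := by omega
      simpa [hjn, hj'] using hσ.2 j (by omega)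
    · by_cases hj2 : j ≤ n
      · have hj' : j = n := by omega
        subst hj'
        have h1 : j + 1 - j = 1 := by omega
        have := hτ.2 0 (by omega)
        rw [hst] at this
        simpa [hjn, hj2, h1] using this
      · have h1 : j + 1 - n = (j - n) + 1 := by omega
        have := hτ.2 (j - n) (by omega)
        simpa [hjn, hj2, h1] using this

lemma aux_concat_eval {n m : ℕ} {σ τ : ℕ → X} (hst : τ 0 = σ n) :
    ∀ j ≤ m, (fun j => if j ≤ n then σ j else τ (j - n)) (n + j) = τ j := by
  intro j _
  rcases Nat.eq_zero_or_pos j with rfl | hj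
  · simp [hst]
  · have h1 : ¬ n + j ≤ n := by omega
    have h2 : n + j - n = j := by omega
    simp [h1, h2]

lemma aux_S_subset [TopologicalSpace X] {F : X → Set X} {S N : Set X}
    (hS : MV.IsInvariant F S) (hN : MV.IsIsolatingSet F S N) : S ⊆ N := by
  intro x hx
  obtain ⟨γ, hγ, i, hi⟩ := hS x hx
  by_contra hxN
  have hxF : x ∈ MV.image F S := by
    have := hγ.2 (i - 1)
    rw [sub_add_cancel, hi] at this
    exact mem_biUnion (hγ.1 (i - 1)) this
  have : x ∈ S ∩ closure (MV.image F S \ N) :=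
    ⟨hx, subset_closure ⟨hxF, hxN⟩⟩
  rw [hN.2.2] at this
  exact this

lemma aux_S_subset_invMinus [TopologicalSpace X] {F : X → Set X} {S N : Set X}
    (hS : MV.IsInvariant F S) (hN : MV.IsIsolatingSet F S N) : S ⊆ MV.invMinus F N S := by
  intro x hx
  exact ⟨aux_S_subset hS hN hx, 0, fun _ => x, ⟨fun _ _ => aux_S_subset hS hN hx,
    fun j hj => absurd hj (by omega)⟩, hx, rfl⟩

lemma aux_step {F : X → Set X} {S N : Set X} {x y : X} [TopologicalSpace X]
    (hx : x ∈ MV.invMinus F N S) (hy : y ∈ F x) (hyN : y ∈ N) :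
    y ∈ MV.invMinus F N S := by
  obtain ⟨hxN, n, σ, hσ, h0, hn⟩ := hx
  refine ⟨hyN, n + 1, _, aux_snoc F N hσ hyN (by rw [hn]; exact hy), by simpa using h0, by simp⟩

lemma aux_back [TopologicalSpace X] {F : X → Set X} {S N : Set X} {y : X}
    (hS : MV.IsInvariant F S) (hN : MV.IsIsolatingSet F S N)
    (hy : y ∈ MV.invMinus F N S) : ∃ x ∈ MV.invMinus F N S, y ∈ F x := by
  obtain ⟨hyN, n, σ, hσ, h0, hn⟩ := hy
  rcases Nat.eq_zero_or_pos n with rfl | hn'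
  · -- y = σ 0 ∈ S
    have hyS : y ∈ S := hn ▸ h0
    obtain ⟨γ, hγ, i, hi⟩ := hS y hyS
    refine ⟨γ (i - 1), aux_S_subset_invMinus hS hN (hγ.1 (i - 1)), ?_⟩
    have := hγ.2 (i - 1)
    rwa [sub_add_cancel, hi] at this
  · refine ⟨σ (n - 1), ⟨hσ.1 (n - 1) (by omega), n - 1, σ,
      ⟨fun j hj => hσ.1 j (by omega), fun j hj => hσ.2 j (by omega)⟩, h0, rfl⟩, ?_⟩
    have := hσ.2 (n - 1) (by omega)
    rwa [Nat.sub_add_cancel hn', hn] at this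

lemma aux_mem_closure [TopologicalSpace X] [Finite X] {A : Set X} {z : X}
    (h : z ∈ closure A) : ∃ w ∈ A, z ∈ closure {w} := by
  have hA : A.Finite := Set.toFinite A
  have : closure A = ⋃ w ∈ A, closure {w} := by
    conv_lhs => rw [← Set.biUnion_of_singleton A]
    exact hA.closure_biUnion _
  rw [this] at h
  simpa using h

lemma aux_invMinus_closed [TopologicalSpace X] [Finite X] {F : X → Set X} {S N : Set X}
    (hF : MV.LscClosed F) (hS : MV.IsInvariant F S) (hN : MV.IsIsolatingSet F S N) :
    IsClosed (MV.invMinus F N S) := by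
  rw [← closure_subset_iff_isClosed]
  intro z hz
  obtain ⟨y, hy, hzy⟩ := aux_mem_closure hz
  obtain ⟨x, hx, hyF⟩ := aux_back hS hN hy
  have hzF : z ∈ F x := by
    have : closure {y} ⊆ F x := (hF.1 x).closure_subset_iff.2 (by simpa using hyF)
    exact this hzy
  have hzN : z ∈ N := by
    have : closure {y} ⊆ N := hN.1.closure_subset_iff.2 (by simpa using hy.1)
    exact this hzy
  exact aux_step hx hzF hzN

lemma aux_invMinus_mono [TopologicalSpace X] {F : X → Set X} {S M N : Set X}
    (hMN : M ⊆ N) : MV.invMinus F M S ⊆ MV.invMinus F N S := by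
  rintro y ⟨hyM, n, σ, hσ, h0, hn⟩
  exact ⟨hMN hyM, n, σ, ⟨fun j hj => hMN (hσ.1 j hj), hσ.2⟩, h0, hn⟩

end Aux

/-- **The extended topological pair for standard index pairs.** If `M ⊆ N` are two
isolating sets for the same isolated invariant set `S`, and `P^M`, `P^N` are the
standard index pairs with extended pairs formed w.r.t. `M`, `N` respectively, then
`(P̄^M)ᵢ ⊆ (P̄^N)ᵢ` for `i = 1, 2`. -/
theorem extended_standardIndexPair_mono {X : Type*} [TopologicalSpace X] [Finite X] [T0Space X]
    (F : X → Set X) (hF : MV.LscClosed F)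
    (S M N : Set X) (hS : MV.IsInvariant F S) (hMN : M ⊆ N)
    (hM : MV.IsIsolatingSet F S M) (hN : MV.IsIsolatingSet F S N) :
    MV.invMinus F M S ∪ closure (MV.image F (MV.invMinus F M S) \ M) ⊆
      MV.invMinus F N S ∪ closure (MV.image F (MV.invMinus F N S) \ N) ∧
    (MV.invMinus F M S \ MV.invPlus F M S) ∪
        closure (MV.image F (MV.invMinus F M S) \ M) ⊆
      (MV.invMinus F N S \ MV.invPlus F N S) ∪
        closure (MV.image F (MV.invMinus F N S) \ N) := by
  set IM := MV.invMinus F M S with hIM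
  set IN := MV.invMinus F N S with hIN
  have hIMN : IM ⊆ IN := aux_invMinus_mono hMN
  have hSM : S ⊆ M := aux_S_subset hS hM
  -- key lemma B : the closure part
  have keyB : closure (MV.image F IM \ M) ⊆
      (IN \ MV.invPlus F N S) ∪ closure (MV.image F IN \ N) := by
    intro z hz
    obtain ⟨w, ⟨hwF, hwM⟩, hzw⟩ := aux_mem_closure hz
    rw [MV.image, Set.mem_iUnion₂] at hwF
    obtain ⟨x, hxIM, hwFx⟩ := hwF
    have hxIN : x ∈ IN := hIMN hxIM
    have hzFx : z ∈ F x :=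
      ((hF.1 x).closure_subset_iff.2 (Set.singleton_subset_iff.2 hwFx)) hzw
    by_cases hzN : z ∈ N
    · have hzIN : z ∈ IN := aux_step hxIN hzFx hzN
      by_cases hzJ : z ∈ MV.invPlus F N S
      · -- derive contradiction via IS1 and IS2 for M
        exfalso
        obtain ⟨hxN, n, σ, hσ, h0, hn⟩ := hxIN
        obtain ⟨_, m, τ, hτ, hτ0, hτm⟩ := hzJ
        have hσ' : MV.IsPathIn F N (n + 1) (fun j => if j ≤ n then σ j else z) :=
          aux_snoc F N hσ hzN (by rw [hn]; exact hzFx)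
        have hst : τ 0 = (fun j => if j ≤ n then σ j else z) (n + 1) := by
          simp [hτ0]
        have hρ := aux_concat F N hσ' hτ hst
        have hend : (fun j => if j ≤ n + 1 then (fun j => if j ≤ n then σ j else z) j
            else τ (j - (n + 1))) (n + 1 + m) ∈ S := by
          rcases Nat.eq_zero_or_pos m with rfl | hm
          · have h1 : ¬ (n + 1 ≤ n) := by omega
            simpa [h1, ← hτ0] using hτm
          · have h1 : ¬ (n + 1 + m ≤ n + 1) := by omega
            have h2 : n + 1 + m - (n + 1) = m := by omega
            simpa [h1, h2] using hτm
        have hall := hN.2.1 _ _ hρ (by simpa using h0) hend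
        have hxS : x ∈ S := by
          have := hall n (by omega)
          have h1 : n ≤ n + 1 := by omega
          simpa [h1, hn] using this
        have hzS : z ∈ S := by
          have := hall (n + 1) (by omega)
          simpa using this
        have hwFS : w ∈ MV.image F S := Set.mem_biUnion hxS hwFx
        have hwmem : w ∈ MV.image F S \ M := ⟨hwFS, hwM⟩
        have : z ∈ closure (MV.image F S \ M) :=
          (closure_mono (Set.singleton_subset_iff.2 hwmem)) hzw
        have : z ∈ S ∩ closure (MV.image F S \ M) := ⟨hzS, this⟩
        rw [hM.2.2] at this
        exact this
      · exact Or.inl ⟨hzIN, hzJ⟩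
    · exact Or.inr (subset_closure ⟨Set.mem_biUnion hxIN hzFx, hzN⟩)
  -- key lemma A
  have keyA : IM \ MV.invPlus F M S ⊆
      (IN \ MV.invPlus F N S) ∪ closure (MV.image F IN \ N) := by
    rintro z ⟨hzIM, hzJM⟩
    have hzIN : z ∈ IN := hIMN hzIM
    by_cases hzJN : z ∈ MV.invPlus F N S
    · exfalso
      apply hzJM
      obtain ⟨hzM, n, σ, hσ, h0, hn⟩ := hzIM
      obtain ⟨_, m, τ, hτ, hτ0, hτm⟩ := hzJN
      have hσN : MV.IsPathIn F N n σ := ⟨fun j hj => hMN (hσ.1 j hj), hσ.2⟩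
      have hst : τ 0 = σ n := by rw [hτ0, hn]
      have hρ := aux_concat F N hσN hτ hst
      have hend : (fun j => if j ≤ n then σ j else τ (j - n)) (n + m) ∈ S := by
        rcases Nat.eq_zero_or_pos m with rfl | hm
        · simpa [← hst] using hτm
        · have h1 : ¬ (n + m ≤ n) := by omega
          have h2 : n + m - n = m := by omega
          simpa [h1, h2] using hτm
      have hall := hN.2.1 _ _ hρ (by simpa using h0) hend
      refine ⟨hzM, m, τ, ⟨fun j hj => ?_, hτ.2⟩, hτ0, hτm⟩
      rcases Nat.eq_zero_or_pos j with rfl | hj'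
      · rw [hτ0]; exact hzM
      · have := hall (n + j) (by omega)
        have h1 : ¬ (n + j ≤ n) := by omega
        have h2 : n + j - n = j := by omega
        rw [if_neg h1, h2] at this
        exact hSM this
    · exact Or.inl ⟨hzIN, hzJN⟩
  constructor
  · apply Set.union_subset
    · exact fun z hz => Or.inl (hIMN hz)
    · exact keyB.trans (Set.union_subset_union_left _ Set.diff_subset)
  · exact Set.union_subset keyA keyB
end

section
/- Let E and C be categories, and let Endo(E) denote the category whose objects are pairs (A, a) with A an object of E and a : A ⟶ A an endomorphism, and whose morphisms (A,a) ⟶ (B,b) are morphisms φ : A ⟶ B in E satisfying φ ≫ b = a ≫ φ (equivalently, Endo(E) is the category of algebras of the identity endofunctor of E). Suppose L : Endo(E) ⥤ C is a normal functor, i.e., for every object (A,a) of Endo(E) the induced morphism a : (A,a) ⟶ (A,a) is mapped by L to an isomorphism in C. Then for any morphisms φ : A ⟶ B and ψ : B ⟶ A in E, the morphism φ defines a morphism (A, φ ≫ ψ) ⟶ (B, ψ ≫ φ) in Endo(E), and L applied to this morphism is an isomorphism in C. -/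
open CategoryTheory

/-- **Isomorphism inducing property of normal functors.** Let `Endo(E)` be the category
of endomorphisms of `E`, realized as algebras of the identity endofunctor of `E`. If
`L : Endo(E) ⥤ C` is normal (it sends every induced morphism `a : (A,a) ⟶ (A,a)` to an
isomorphism), then for any `φ : A ⟶ B` and `ψ : B ⟶ A` in `E`, the morphism
`φ : (A, φ ≫ ψ) ⟶ (B, ψ ≫ φ)` of `Endo(E)` is sent by `L` to an isomorphism in `C`. -/
theorem normalFunctor_isIso {E C : Type*} [Category E] [Category C]
    (L : Endofunctor.Algebra (𝟭 E) ⥤ C)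
    (hL : ∀ A : Endofunctor.Algebra (𝟭 E),
      IsIso (L.map (⟨A.str, by simp⟩ : A ⟶ A)))
    {A B : E} (φ : A ⟶ B) (ψ : B ⟶ A) :
    IsIso (L.map (⟨φ, by simp⟩ :
      (⟨A, φ ≫ ψ⟩ : Endofunctor.Algebra (𝟭 E)) ⟶ ⟨B, ψ ≫ φ⟩)) := by
  let AA : Endofunctor.Algebra (𝟭 E) := ⟨A, φ ≫ ψ⟩
  let BB : Endofunctor.Algebra (𝟭 E) := ⟨B, ψ ≫ φ⟩
  let f : AA ⟶ BB := ⟨φ, by simp [AA, BB]⟩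
  let g : BB ⟶ AA := ⟨ψ, by simp [AA, BB]⟩
  have hfg : f ≫ g = (⟨AA.str, by simp⟩ : AA ⟶ AA) := by
    apply Endofunctor.Algebra.Hom.ext; rfl
  have hgf : g ≫ f = (⟨BB.str, by simp⟩ : BB ⟶ BB) := by
    apply Endofunctor.Algebra.Hom.ext; rfl
  have h1 : IsIso (L.map f ≫ L.map g) := by
    rw [← L.map_comp, hfg]; exact hL AA
  have h2 : IsIso (L.map g ≫ L.map f) := by
    rw [← L.map_comp, hgf]; exact hL BB
  have hmono : Mono (L.map f) := mono_of_mono (L.map f) (L.map g)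
  have hsplit : IsSplitEpi (L.map f) :=
    ⟨⟨⟨inv (L.map g ≫ L.map f) ≫ L.map g, by
      rw [Category.assoc, IsIso.inv_comp_eq]; simp⟩⟩⟩
  exact isIso_of_mono_of_isSplitEpi (L.map f)
end
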